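/- arXiv:0807.0974 — 3 statements merged into one kernel-verified Lean document; each statement's English description precedes it below -/
import Mathlib

section
/- Any proper graded Lie subalgebra b = ⊕_{i=-2}^2 b_i of the |2|-graded Lie algebra g = so(n+1,n) (n ≥ 3) has dimension at most 2n² - n + 1 = dim g - (2n - 1). -/
open Matrix

attribute [local instance 100] LieRing.ofAssociativeRing

/-- Index type for `(n+1+n) × (n+1+n)` block matrices. -/
abbrev SOIdx (n : ℕ) := (Fin n) ⊕ ((Fin 1) ⊕ (Fin n))

noncomputable section

/-- Degree `0` block: `A` in the top left, `-Aᵀ` in the bottom right. -/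
def mkA (n : ℕ) (A : Matrix (Fin n) (Fin n) ℝ) : Matrix (SOIdx n) (SOIdx n) ℝ :=
  fun p q => match p, q with
  | .inl i, .inl j => A i j
  | .inr (.inr i), .inr (.inr j) => -(A j i)
  | _, _ => 0

/-- Degree `1` block: `v` as a column, `-vᵀ` as a row. -/
def mkv (n : ℕ) (v : Fin n → ℝ) : Matrix (SOIdx n) (SOIdx n) ℝ :=
  fun p q => match p, q with
  | .inl i, .inr (.inl _) => v i
  | .inr (.inl _), .inr (.inr j) => -(v j)
  | _, _ => 0

/-- Degree `-1` block: `w` as a row, `-wᵀ` as a column. -/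
def mkw (n : ℕ) (w : Fin n → ℝ) : Matrix (SOIdx n) (SOIdx n) ℝ :=
  fun p q => match p, q with
  | .inr (.inl _), .inl j => w j
  | .inr (.inr i), .inr (.inl _) => -(w i)
  | _, _ => 0

/-- Degree `2` block: skew matrix `B` in the top right corner. -/
def mkB (n : ℕ) (B : Matrix (Fin n) (Fin n) ℝ) : Matrix (SOIdx n) (SOIdx n) ℝ :=
  fun p q => match p, q with
  | .inl i, .inr (.inr j) => B i j
  | _, _ => 0

/-- Degree `-2` block: skew matrix `C` in the bottom left corner. -/
def mkC (n : ℕ) (C : Matrix (Fin n) (Fin n) ℝ) : Matrix (SOIdx n) (SOIdx n) ℝ :=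
  fun p q => match p, q with
  | .inr (.inr i), .inl j => C i j
  | _, _ => 0

/-- The grading components of `so(n+1,n)` in the block matrix realization. -/
def soPiece (n : ℕ) (d : ℤ) : Submodule ℝ (Matrix (SOIdx n) (SOIdx n) ℝ) :=
  if d = -2 then Submodule.span ℝ {M | ∃ C, Cᵀ = -C ∧ M = mkC n C}
  else if d = -1 then Submodule.span ℝ {M | ∃ w, M = mkw n w}
  else if d = 0 then Submodule.span ℝ {M | ∃ A, M = mkA n A}
  else if d = 1 then Submodule.span ℝ {M | ∃ v, M = mkv n v}
  else if d = 2 then Submodule.span ℝ {M | ∃ B, Bᵀ = -B ∧ M = mkB n B}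
  else ⊥

/-!
Write `W = b₁` and `U = b₋₁`, subspaces of `ℝⁿ` of dimensions `k` and `l`. If `W = U = ℝⁿ`, then
`b` contains `[g₁, g₋₁] = g₀` and `[g₋₁, g₋₁] = g₋₂`, `[g₁, g₁] = g₂`, so `b = g`. Otherwise the
brackets force `b₀` to preserve `W` (and, transposed, `U`), `b₂` to map `U` into `W`, and `b₋₂` to
map `W` into `U`. Pairing against `W^⊥` or `U^⊥` shows that these conditions cut out subspaces of
codimension at least `max((n-k)k, (n-l)l)` in `g₀` and `(n-k)·dim(U ∩ W)`, `(n-l)·dim(U ∩ W)` in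
`g₂`, `g₋₂`. Together with the codimensions `n-k`, `n-l` of `b₁`, `b₋₁` this adds up to at least
`2n - 1`, except when `W = 0, U = ℝⁿ` (or vice versa), where instead `b₂ = 0` (or `b₋₂ = 0`).
-/

open Module

section FiniteDimensional

variable {K M N : Type*} [Field K] [AddCommGroup M] [Module K M] [FiniteDimensional K M]
  [AddCommGroup N] [Module K N]

theorem Submodule.finrank_add_finrank_le_of_map_eq_top (f : M →ₗ[K] N) {P Q : Submodule K M}
    (hQ : Q.map f = ⊤) (hP : P ≤ Q ⊓ LinearMap.ker f) :
    finrank K P + finrank K N ≤ finrank K Q := by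
  have hrank := LinearMap.finrank_range_add_finrank_ker (f.domRestrict Q)
  rw [LinearMap.range_domRestrict, hQ, finrank_top, LinearMap.ker_domRestrict] at hrank
  have hPQ : finrank K P ≤ finrank K ((LinearMap.ker f).comap Q.subtype) := by
    rw [← (Submodule.comapSubtypeEquivOfLe (hP.trans inf_le_left)).finrank_eq]
    exact Submodule.finrank_mono (Submodule.comap_mono (hP.trans inf_le_right))
  omega

theorem Submodule.finrank_add_finrank_le_add_finrank_inf (U W : Submodule K M) :
    finrank K U + finrank K W ≤ finrank K M + finrank K ↥(U ⊓ W) := by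
  have := Submodule.finrank_sup_add_finrank_inf_eq U W
  have := (U ⊔ W).finrank_le
  omega

end FiniteDimensional

variable {n : ℕ}

abbrev dotForm (n : ℕ) : LinearMap.BilinForm ℝ (Fin n → ℝ) := dotProductBilin ℝ ℝ

theorem dotForm_isRefl : (dotForm n).IsRefl := fun x y h => by
  simpa [dotProduct_comm] using h

theorem dotForm_nondegenerate : (dotForm n).Nondegenerate :=
  (LinearMap.IsRefl.nondegenerate_iff_separatingLeft dotForm_isRefl).mpr fun x hx =>
    dotProduct_self_eq_zero.mp (hx x)

theorem isCompl_dotForm_orthogonal (W : Submodule ℝ (Fin n → ℝ)) :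
    IsCompl W ((dotForm n).orthogonal W) :=
  (LinearMap.BilinForm.isCompl_orthogonal_iff_disjoint dotForm_isRefl).mpr <|
    Submodule.disjoint_def.mpr fun x hx hx' => dotProduct_self_eq_zero.mp (hx' x hx)

def skewMatrices (n : ℕ) : Submodule ℝ (Matrix (Fin n) (Fin n) ℝ) where
  carrier := {B | Bᵀ = -B}
  add_mem' {B B'} hB hB' := by simp_all [transpose_add, add_comm]
  zero_mem' := by simp
  smul_mem' c B hB := by simp_all [transpose_smul]

theorem mem_skewMatrices {B : Matrix (Fin n) (Fin n) ℝ} : B ∈ skewMatrices n ↔ Bᵀ = -B := Iff.rfl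

theorem skewMatrices_apply_swap {B : Matrix (Fin n) (Fin n) ℝ} (hB : B ∈ skewMatrices n)
    (i j : Fin n) : B j i = -B i j := by
  simpa using congr_fun₂ hB i j

theorem two_mul_finrank_skewMatrices_add_le : 2 * finrank ℝ (skewMatrices n) + n ≤ n * n := by
  let F : skewMatrices n →ₗ[ℝ] {p : Fin n × Fin n // p.1 < p.2} → ℝ :=
    { toFun B p := (B : Matrix (Fin n) (Fin n) ℝ) p.1.1 p.1.2
      map_add' _ _ := rfl
      map_smul' _ _ := rfl }
  have hF : Function.Injective F := by
    intro B B' h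
    ext i j
    have hB := skewMatrices_apply_swap B.2
    have hB' := skewMatrices_apply_swap B'.2
    rcases lt_trichotomy i j with hij | rfl | hij
    · exact congr_fun h ⟨(i, j), hij⟩
    · linarith [hB i i, hB' i i]
    · rw [← neg_neg (B.1 i j), ← neg_neg (B'.1 i j), ← hB, ← hB']
      exact congrArg _ (congr_fun h ⟨(j, i), hij⟩)
  have hcard : finrank ℝ (skewMatrices n) ≤ n.choose 2 := by
    simpa [Fintype.card_subtype, Fintype.card_product_filter_lt] using
      LinearMap.finrank_le_finrank_of_injective hF
  have hchoose : (2 * n.choose 2 + n : ℚ) = n * n := by rw [Nat.cast_choose_two]; ring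
  have : 2 * n.choose 2 + n = n * n := by exact_mod_cast hchoose
  omega

def matricesMapsTo (U W : Submodule ℝ (Fin n → ℝ)) : Submodule ℝ (Matrix (Fin n) (Fin n) ℝ) where
  carrier := {A | ∀ u ∈ U, A *ᵥ u ∈ W}
  add_mem' hA hA' u hu := by rw [add_mulVec]; exact W.add_mem (hA u hu) (hA' u hu)
  zero_mem' u _ := by rw [zero_mulVec]; exact W.zero_mem
  smul_mem' c _ hA u hu := by rw [smul_mulVec]; exact W.smul_mem c (hA u hu)

theorem matricesMapsTo_top_bot : matricesMapsTo (n := n) ⊤ ⊥ = ⊥ :=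
  eq_bot_iff.mpr fun A hA => (Submodule.mem_bot ℝ).mpr <|
    ext_iff_mulVec.mpr fun v => by simpa using hA v Submodule.mem_top

def pairingOn (X I : Submodule ℝ (Fin n → ℝ)) :
    Matrix (Fin n) (Fin n) ℝ →ₗ[ℝ] X →ₗ[ℝ] I →ₗ[ℝ] ℝ where
  toFun M :=
    { toFun x :=
        { toFun u := (x : Fin n → ℝ) ⬝ᵥ M *ᵥ u
          map_add' _ _ := by simp [mulVec_add, dotProduct_add]
          map_smul' _ _ := by simp [mulVec_smul, dotProduct_smul] }
      map_add' _ _ := by ext; simp [add_dotProduct]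
      map_smul' _ _ := by ext; simp [smul_dotProduct] }
  map_add' _ _ := by ext; simp [add_mulVec, dotProduct_add]
  map_smul' _ _ := by ext; simp [smul_mulVec, dotProduct_smul]

@[simp] theorem pairingOn_apply (X I : Submodule ℝ (Fin n → ℝ)) (M : Matrix (Fin n) (Fin n) ℝ)
    (x : X) (u : I) : pairingOn X I M x u = (x : Fin n → ℝ) ⬝ᵥ M *ᵥ u := rfl

/-- `γ` is realized by `M - Mᵀ`, where `M` represents `γ (pX ·) (pI ·)` for a left inverse `pX` of
`X ↪ ℝⁿ` and the orthogonal projection `pI` onto `I`: since `X ⊥ I`, `pI` vanishes on `X`, which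
kills the `Mᵀ` term. -/
theorem map_skewMatrices_pairingOn_eq_top {X I : Submodule ℝ (Fin n → ℝ)}
    (hXI : X ≤ (dotForm n).orthogonal I) : (skewMatrices n).map (pairingOn X I) = ⊤ := by
  refine eq_top_iff.mpr fun γ _ => ?_
  obtain ⟨pX, hpX⟩ := LinearMap.exists_leftInverse_of_injective X.subtype X.ker_subtype
  set pI := I.projectionOnto _ (isCompl_dotForm_orthogonal I)
  set M := LinearMap.toMatrix₂' ℝ (γ.compl₁₂ pX pI)
  have hM : ∀ a b, a ⬝ᵥ M *ᵥ b = γ (pX a) (pI b) := fun a b => by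
    rw [← Matrix.toLinearMap₂'_apply', Matrix.toLinearMap₂'_toMatrix', LinearMap.compl₁₂_apply]
  refine ⟨M - Mᵀ, by rw [SetLike.mem_coe, mem_skewMatrices, transpose_sub, transpose_transpose,
    neg_sub], LinearMap.ext fun x => LinearMap.ext fun u => ?_⟩
  have hx : pI x = 0 :=
    Submodule.projectionOnto_apply_right (isCompl_dotForm_orthogonal I) ⟨(x : Fin n → ℝ), hXI x.2⟩
  have hu : pI u = u := Submodule.projectionOnto_apply_left _ u
  have hpXx : pX x = x := LinearMap.congr_fun hpX x
  rw [pairingOn_apply, sub_mulVec, dotProduct_sub, mulVec_transpose,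
    dotProduct_comm _ (_ ᵥ* M), ← dotProduct_mulVec, hM, hM, hx, hu, hpXx, map_zero, sub_zero]

theorem pairingOn_eq_zero {X I U W : Submodule ℝ (Fin n → ℝ)} (hX : X ≤ (dotForm n).orthogonal W)
    (hI : I ≤ U) {A : Matrix (Fin n) (Fin n) ℝ} (hA : A ∈ matricesMapsTo U W) :
    pairingOn X I A = 0 :=
  LinearMap.ext fun x => LinearMap.ext fun u => by
    rw [pairingOn_apply, dotProduct_comm]
    exact hX x.2 _ (hA u (hI u.2))

theorem finrank_pairingOn_codomain (W I : Submodule ℝ (Fin n → ℝ)) :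
    finrank ℝ (((dotForm n).orthogonal W) →ₗ[ℝ] I →ₗ[ℝ] ℝ) = (n - finrank ℝ W) * finrank ℝ I := by
  rw [finrank_linearMap, finrank_linearMap, finrank_self, mul_one,
    LinearMap.BilinForm.finrank_orthogonal dotForm_nondegenerate, finrank_fin_fun]

theorem finrank_matricesMapsTo_add_le (W : Submodule ℝ (Fin n → ℝ)) :
    finrank ℝ (matricesMapsTo W W) + (n - finrank ℝ W) * finrank ℝ W ≤ n * n := by
  have h := Submodule.finrank_add_finrank_le_of_map_eq_top
    (N := ((dotForm n).orthogonal W) →ₗ[ℝ] W →ₗ[ℝ] ℝ) (pairingOn _ W) (Q := ⊤)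
    (top_unique <| (map_skewMatrices_pairingOn_eq_top le_rfl).ge.trans (Submodule.map_mono le_top))
    (P := matricesMapsTo W W)
    fun A hA => ⟨trivial, LinearMap.mem_ker.mpr (pairingOn_eq_zero le_rfl le_rfl hA)⟩
  simpa [finrank_pairingOn_codomain, finrank_top, finrank_matrix] using h

theorem finrank_skewMatrices_inf_matricesMapsTo_add_le (U W : Submodule ℝ (Fin n → ℝ)) :
    finrank ℝ ↥(skewMatrices n ⊓ matricesMapsTo U W) + (n - finrank ℝ W) * finrank ℝ ↥(U ⊓ W)
      ≤ finrank ℝ (skewMatrices n) := by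
  have hXI : (dotForm n).orthogonal W ≤ (dotForm n).orthogonal (U ⊓ W) :=
    LinearMap.BilinForm.orthogonal_le inf_le_right
  have h := Submodule.finrank_add_finrank_le_of_map_eq_top
    (N := ((dotForm n).orthogonal W) →ₗ[ℝ] ↥(U ⊓ W) →ₗ[ℝ] ℝ) (pairingOn _ _)
    (map_skewMatrices_pairingOn_eq_top hXI) (P := skewMatrices n ⊓ matricesMapsTo U W)
    fun B hB => ⟨hB.1, LinearMap.mem_ker.mpr (pairingOn_eq_zero le_rfl inf_le_left hB.2)⟩
  rwa [finrank_pairingOn_codomain] at h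

section BlockMaps

variable (n)

def mkAₗ : Matrix (Fin n) (Fin n) ℝ →ₗ[ℝ] Matrix (SOIdx n) (SOIdx n) ℝ where
  toFun := mkA n
  map_add' _ _ := by ext (i | i | i) (j | j | j) <;> simp [mkA, add_comm]
  map_smul' _ _ := by ext (i | i | i) (j | j | j) <;> simp [mkA]

def mkvₗ : (Fin n → ℝ) →ₗ[ℝ] Matrix (SOIdx n) (SOIdx n) ℝ where
  toFun := mkv n
  map_add' _ _ := by ext (i | i | i) (j | j | j) <;> simp [mkv, add_comm]
  map_smul' _ _ := by ext (i | i | i) (j | j | j) <;> simp [mkv]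

def mkwₗ : (Fin n → ℝ) →ₗ[ℝ] Matrix (SOIdx n) (SOIdx n) ℝ where
  toFun := mkw n
  map_add' _ _ := by ext (i | i | i) (j | j | j) <;> simp [mkw, add_comm]
  map_smul' _ _ := by ext (i | i | i) (j | j | j) <;> simp [mkw]

def mkBₗ : Matrix (Fin n) (Fin n) ℝ →ₗ[ℝ] Matrix (SOIdx n) (SOIdx n) ℝ where
  toFun := mkB n
  map_add' _ _ := by ext (i | i | i) (j | j | j) <;> simp [mkB]
  map_smul' _ _ := by ext (i | i | i) (j | j | j) <;> simp [mkB]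

def mkCₗ : Matrix (Fin n) (Fin n) ℝ →ₗ[ℝ] Matrix (SOIdx n) (SOIdx n) ℝ where
  toFun := mkC n
  map_add' _ _ := by ext (i | i | i) (j | j | j) <;> simp [mkC]
  map_smul' _ _ := by ext (i | i | i) (j | j | j) <;> simp [mkC]

end BlockMaps

@[simp] theorem mkAₗ_apply (A : Matrix (Fin n) (Fin n) ℝ) : mkAₗ n A = mkA n A := rfl
@[simp] theorem mkvₗ_apply (v : Fin n → ℝ) : mkvₗ n v = mkv n v := rfl
@[simp] theorem mkwₗ_apply (w : Fin n → ℝ) : mkwₗ n w = mkw n w := rfl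
@[simp] theorem mkBₗ_apply (B : Matrix (Fin n) (Fin n) ℝ) : mkBₗ n B = mkB n B := rfl
@[simp] theorem mkCₗ_apply (C : Matrix (Fin n) (Fin n) ℝ) : mkCₗ n C = mkC n C := rfl

theorem lie_mkA_mkv (A : Matrix (Fin n) (Fin n) ℝ) (v : Fin n → ℝ) :
    ⁅mkA n A, mkv n v⁆ = mkv n (A *ᵥ v) := by
  rw [Ring.lie_def]
  ext (i | i | i) (j | j | j) <;>
    simp [mul_apply, mkA, mkv, Fintype.sum_sum_type, mulVec, dotProduct, mul_comm]

theorem lie_mkA_mkw (A : Matrix (Fin n) (Fin n) ℝ) (w : Fin n → ℝ) :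
    ⁅mkA n A, mkw n w⁆ = mkw n (-(Aᵀ *ᵥ w)) := by
  rw [Ring.lie_def]
  ext (i | i | i) (j | j | j) <;>
    simp [mul_apply, mkA, mkw, Fintype.sum_sum_type, mulVec, dotProduct, mul_comm]

theorem lie_mkB_mkw {B : Matrix (Fin n) (Fin n) ℝ} (hB : B ∈ skewMatrices n) (w : Fin n → ℝ) :
    ⁅mkB n B, mkw n w⁆ = mkv n (-(B *ᵥ w)) := by
  rw [Ring.lie_def]
  ext (i | i | i) (j | j | j) <;>
    simp [mul_apply, mkB, mkw, mkv, Fintype.sum_sum_type, mulVec, dotProduct]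
  simp [skewMatrices_apply_swap hB _ j, mul_comm]

theorem lie_mkC_mkv {C : Matrix (Fin n) (Fin n) ℝ} (hC : C ∈ skewMatrices n) (v : Fin n → ℝ) :
    ⁅mkC n C, mkv n v⁆ = mkw n (-(C *ᵥ v)) := by
  rw [Ring.lie_def]
  ext (i | i | i) (j | j | j) <;>
    simp [mul_apply, mkC, mkv, mkw, Fintype.sum_sum_type, mulVec, dotProduct]
  simp [skewMatrices_apply_swap hC _ j, mul_comm]

theorem lie_mkv_mkw (v w : Fin n → ℝ) : ⁅mkv n v, mkw n w⁆ = mkA n (vecMulVec v w) := by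
  rw [Ring.lie_def]
  ext (i | i | i) (j | j | j) <;>
    simp [mul_apply, mkA, mkw, mkv, Fintype.sum_sum_type, vecMulVec_apply, mul_comm]

theorem lie_mkv_mkv (v u : Fin n → ℝ) :
    ⁅mkv n v, mkv n u⁆ = mkB n (vecMulVec u v - vecMulVec v u) := by
  rw [Ring.lie_def]
  ext (i | i | i) (j | j | j) <;>
    simp [mul_apply, mkB, mkv, Fintype.sum_sum_type, vecMulVec_apply, mul_comm]; ring

theorem lie_mkw_mkw (v u : Fin n → ℝ) :
    ⁅mkw n v, mkw n u⁆ = mkC n (vecMulVec u v - vecMulVec v u) := by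
  rw [Ring.lie_def]
  ext (i | i | i) (j | j | j) <;>
    simp [mul_apply, mkC, mkw, Fintype.sum_sum_type, vecMulVec_apply, mul_comm]; ring

theorem mkA_eq_sum_lie (A : Matrix (Fin n) (Fin n) ℝ) :
    mkA n A = ∑ j, ⁅mkv n (fun i => A i j), mkw n (Pi.single j 1)⁆ := by
  simp_rw [lie_mkv_mkw, ← mkAₗ_apply, ← map_sum]
  congr 1
  ext p q
  simp [vecMulVec_apply, Matrix.sum_apply, Pi.single_apply]

theorem mkB_eq_sum_lie {B : Matrix (Fin n) (Fin n) ℝ} (hB : B ∈ skewMatrices n) :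
    mkB n B = ∑ j, ⁅mkv n (fun i => -B i j / 2), mkv n (Pi.single j 1)⁆ := by
  simp_rw [lie_mkv_mkv, ← mkBₗ_apply, ← map_sum]
  congr 1
  ext p q
  simp [vecMulVec_apply, Matrix.sum_apply, Pi.single_apply, Finset.sum_sub_distrib,
    skewMatrices_apply_swap hB q p]
  ring

theorem mkC_eq_sum_lie {C : Matrix (Fin n) (Fin n) ℝ} (hC : C ∈ skewMatrices n) :
    mkC n C = ∑ j, ⁅mkw n (fun i => -C i j / 2), mkw n (Pi.single j 1)⁆ := by
  simp_rw [lie_mkw_mkw, ← mkCₗ_apply, ← map_sum]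
  congr 1
  ext p q
  simp [vecMulVec_apply, Matrix.sum_apply, Pi.single_apply, Finset.sum_sub_distrib,
    skewMatrices_apply_swap hC q p]
  ring

theorem soPiece_cases (d : ℤ) :
    soPiece n d = (skewMatrices n).map (mkCₗ n) ∨ soPiece n d = LinearMap.range (mkwₗ n) ∨
      soPiece n d = LinearMap.range (mkAₗ n) ∨ soPiece n d = LinearMap.range (mkvₗ n) ∨
      soPiece n d = (skewMatrices n).map (mkBₗ n) ∨ soPiece n d = ⊥ := by
  unfold soPiece
  split_ifs
  · refine Or.inl ?_
    rw [← Submodule.span_eq (Submodule.map _ _)]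
    congr 1; ext; simp [mem_skewMatrices, eq_comm]
  · refine Or.inr (Or.inl ?_)
    rw [← Submodule.span_eq (LinearMap.range _)]
    congr 1; ext; simp [eq_comm]
  · refine Or.inr (Or.inr (Or.inl ?_))
    rw [← Submodule.span_eq (LinearMap.range _)]
    congr 1; ext; simp [eq_comm]
  · refine Or.inr (Or.inr (Or.inr (Or.inl ?_)))
    rw [← Submodule.span_eq (LinearMap.range _)]
    congr 1; ext; simp [eq_comm]
  · refine Or.inr (Or.inr (Or.inr (Or.inr (Or.inl ?_))))
    rw [← Submodule.span_eq (Submodule.map _ _)]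
    congr 1; ext; simp [mem_skewMatrices, eq_comm]
  · exact Or.inr (Or.inr (Or.inr (Or.inr (Or.inr rfl))))

section Components

variable (b : LieSubalgebra ℝ (Matrix (SOIdx n) (SOIdx n) ℝ))

/-- The graded pieces `b₀, b₁, b₋₁, b₂, b₋₂` of `b`, in the block coordinates `A, v, w, B, C` of
`mkA, mkv, mkw, mkB, mkC`. -/
def deg0 : Submodule ℝ (Matrix (Fin n) (Fin n) ℝ) := b.toSubmodule.comap (mkAₗ n)

def deg1 : Submodule ℝ (Fin n → ℝ) := b.toSubmodule.comap (mkvₗ n)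

def degNeg1 : Submodule ℝ (Fin n → ℝ) := b.toSubmodule.comap (mkwₗ n)

def deg2 : Submodule ℝ (Matrix (Fin n) (Fin n) ℝ) :=
  skewMatrices n ⊓ b.toSubmodule.comap (mkBₗ n)

def degNeg2 : Submodule ℝ (Matrix (Fin n) (Fin n) ℝ) :=
  skewMatrices n ⊓ b.toSubmodule.comap (mkCₗ n)

theorem deg0_le_matricesMapsTo : deg0 b ≤ matricesMapsTo (deg1 b) (deg1 b) :=
  fun A hA v hv => by
    simpa [deg1, lie_mkA_mkv] using b.lie_mem (x := mkA n A) hA hv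

theorem map_transpose_deg0_le_matricesMapsTo :
    (deg0 b).map (transposeLinearEquiv _ _ ℝ ℝ).toLinearMap ≤
      matricesMapsTo (degNeg1 b) (degNeg1 b) := by
  rintro _ ⟨A, hA, rfl⟩ w hw
  have h := b.lie_mem (x := mkA n A) (y := mkw n w) hA hw
  rw [lie_mkA_mkw] at h
  simpa using (degNeg1 b).neg_mem h

theorem deg2_le : deg2 b ≤ skewMatrices n ⊓ matricesMapsTo (degNeg1 b) (deg1 b) := by
  rintro B ⟨hB, hBb⟩
  refine ⟨hB, fun w hw => ?_⟩
  have h := b.lie_mem (x := mkB n B) (y := mkw n w) hBb hw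
  rw [lie_mkB_mkw hB] at h
  simpa using (deg1 b).neg_mem h

theorem degNeg2_le : degNeg2 b ≤ skewMatrices n ⊓ matricesMapsTo (deg1 b) (degNeg1 b) := by
  rintro C ⟨hC, hCb⟩
  refine ⟨hC, fun v hv => ?_⟩
  have h := b.lie_mem (x := mkC n C) (y := mkv n v) hCb hv
  rw [lie_mkC_mkv hC] at h
  simpa using (degNeg1 b).neg_mem h


theorem iSup_soPiece_le (h1 : deg1 b = ⊤) (hneg1 : degNeg1 b = ⊤) :
    ⨆ d : ℤ, soPiece n d ≤ b.toSubmodule := by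
  have hv (v : Fin n → ℝ) : mkv n v ∈ b := (h1 ▸ Submodule.mem_top : v ∈ deg1 b)
  have hw (w : Fin n → ℝ) : mkw n w ∈ b := (hneg1 ▸ Submodule.mem_top : w ∈ degNeg1 b)
  refine iSup_le fun d => ?_
  rcases soPiece_cases (n := n) d with h | h | h | h | h | h <;> rw [h]
  · rintro _ ⟨C, hC, rfl⟩
    rw [mkCₗ_apply, mkC_eq_sum_lie hC]
    exact b.sum_mem fun j _ => b.lie_mem (hw _) (hw _)
  · rintro _ ⟨w, rfl⟩
    exact hw w
  · rintro _ ⟨A, rfl⟩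
    rw [mkAₗ_apply, mkA_eq_sum_lie]
    exact b.sum_mem fun j _ => b.lie_mem (hv _) (hw _)
  · rintro _ ⟨v, rfl⟩
    exact hv v
  · rintro _ ⟨B, hB, rfl⟩
    rw [mkBₗ_apply, mkB_eq_sum_lie hB]
    exact b.sum_mem fun j _ => b.lie_mem (hv _) (hv _)
  · exact bot_le

theorem toSubmodule_le_sup_map_deg
    (hgraded : b.toSubmodule = ⨆ d : ℤ, (b.toSubmodule ⊓ soPiece n d)) :
    b.toSubmodule ≤ (degNeg2 b).map (mkCₗ n) ⊔ (degNeg1 b).map (mkwₗ n) ⊔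
      (deg0 b).map (mkAₗ n) ⊔ (deg1 b).map (mkvₗ n) ⊔ (deg2 b).map (mkBₗ n) := by
  refine hgraded.le.trans (iSup_le fun d => ?_)
  rcases soPiece_cases (n := n) d with h | h | h | h | h | h <;> rw [h]
  · rintro _ ⟨hx, C, hC, rfl⟩
    exact Submodule.mem_sup_left (Submodule.mem_sup_left (Submodule.mem_sup_left
      (Submodule.mem_sup_left ⟨C, ⟨hC, hx⟩, rfl⟩)))
  · rintro _ ⟨hx, w, rfl⟩
    exact Submodule.mem_sup_left (Submodule.mem_sup_left (Submodule.mem_sup_left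
      (Submodule.mem_sup_right ⟨w, hx, rfl⟩)))
  · rintro _ ⟨hx, A, rfl⟩
    exact Submodule.mem_sup_left (Submodule.mem_sup_left (Submodule.mem_sup_right ⟨A, hx, rfl⟩))
  · rintro _ ⟨hx, v, rfl⟩
    exact Submodule.mem_sup_left (Submodule.mem_sup_right ⟨v, hx, rfl⟩)
  · rintro _ ⟨hx, B, hB, rfl⟩
    exact Submodule.mem_sup_right ⟨B, ⟨hB, hx⟩, rfl⟩
  · simp

theorem finrank_le_sum_finrank_deg
    (hgraded : b.toSubmodule = ⨆ d : ℤ, (b.toSubmodule ⊓ soPiece n d)) :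
    finrank ℝ b.toSubmodule ≤ finrank ℝ (degNeg2 b) + finrank ℝ (degNeg1 b) +
      finrank ℝ (deg0 b) + finrank ℝ (deg1 b) + finrank ℝ (deg2 b) := by
  have hb := Submodule.finrank_mono (toSubmodule_le_sup_map_deg b hgraded)
  set PC := (degNeg2 b).map (mkCₗ n)
  set Pw := (degNeg1 b).map (mkwₗ n)
  set PA := (deg0 b).map (mkAₗ n)
  set Pv := (deg1 b).map (mkvₗ n)
  set PB := (deg2 b).map (mkBₗ n)
  have h1 := Submodule.finrank_add_le_finrank_add_finrank (PC ⊔ Pw ⊔ PA ⊔ Pv) PB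
  have h2 := Submodule.finrank_add_le_finrank_add_finrank (PC ⊔ Pw ⊔ PA) Pv
  have h3 := Submodule.finrank_add_le_finrank_add_finrank (PC ⊔ Pw) PA
  have h4 := Submodule.finrank_add_le_finrank_add_finrank PC Pw
  have : finrank ℝ PC ≤ finrank ℝ (degNeg2 b) := Submodule.finrank_map_le _ _
  have : finrank ℝ Pw ≤ finrank ℝ (degNeg1 b) := Submodule.finrank_map_le _ _
  have : finrank ℝ PA ≤ finrank ℝ (deg0 b) := Submodule.finrank_map_le _ _
  have : finrank ℝ Pv ≤ finrank ℝ (deg1 b) := Submodule.finrank_map_le _ _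
  have : finrank ℝ PB ≤ finrank ℝ (deg2 b) := Submodule.finrank_map_le _ _
  omega


theorem finrank_deg0_add_le_deg1 :
    finrank ℝ (deg0 b) + (n - finrank ℝ (deg1 b)) * finrank ℝ (deg1 b) ≤ n * n :=
  (Nat.add_le_add_right (Submodule.finrank_mono (deg0_le_matricesMapsTo b)) _).trans
    (finrank_matricesMapsTo_add_le _)

theorem finrank_deg0_add_le_degNeg1 :
    finrank ℝ (deg0 b) + (n - finrank ℝ (degNeg1 b)) * finrank ℝ (degNeg1 b) ≤ n * n := by
  rw [← LinearEquiv.finrank_map_eq (transposeLinearEquiv _ _ ℝ ℝ)]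
  exact (Nat.add_le_add_right (Submodule.finrank_mono
    (map_transpose_deg0_le_matricesMapsTo b)) _).trans (finrank_matricesMapsTo_add_le _)

theorem finrank_deg2_add_le :
    finrank ℝ (deg2 b) + (n - finrank ℝ (deg1 b)) * finrank ℝ ↥(deg1 b ⊓ degNeg1 b) ≤
      finrank ℝ (skewMatrices n) := by
  rw [inf_comm]
  exact (Nat.add_le_add_right (Submodule.finrank_mono (deg2_le b)) _).trans
    (finrank_skewMatrices_inf_matricesMapsTo_add_le _ _)

theorem finrank_degNeg2_add_le :
    finrank ℝ (degNeg2 b) + (n - finrank ℝ (degNeg1 b)) * finrank ℝ ↥(deg1 b ⊓ degNeg1 b) ≤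
      finrank ℝ (skewMatrices n) :=
  (Nat.add_le_add_right (Submodule.finrank_mono (degNeg2_le b)) _).trans
    (finrank_skewMatrices_inf_matricesMapsTo_add_le _ _)

theorem deg2_eq_bot (h1 : deg1 b = ⊥) (hneg1 : degNeg1 b = ⊤) : deg2 b = ⊥ := by
  have := deg2_le b
  rwa [h1, hneg1, matricesMapsTo_top_bot, inf_bot_eq, le_bot_iff] at this

theorem degNeg2_eq_bot (hneg1 : degNeg1 b = ⊥) (h1 : deg1 b = ⊤) : degNeg2 b = ⊥ := by
  have := degNeg2_le b
  rwa [h1, hneg1, matricesMapsTo_top_bot, inf_bot_eq, le_bot_iff] at this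

end Components

/-- `k, l, i, a, s, t, m` stand for the dimensions of `b₁`, `b₋₁`, `b₁ ∩ b₋₁`, `b₀`, `b₂`, `b₋₂`
and of the skew-symmetric matrices. -/
theorem sum_le_of_component_bounds (n k l i a s t m : ℕ) (hn : 3 ≤ n) (hk : k ≤ n) (hl : l ≤ n)
    (hi : k + l ≤ n + i) (hA : a + (n - k) * k ≤ n * n) (hA' : a + (n - l) * l ≤ n * n)
    (hm : 2 * m + n ≤ n * n) (hS : s + (n - k) * i ≤ m) (hT : t + (n - l) * i ≤ m)
    (hS0 : k = 0 → l = n → s = 0) (hT0 : l = 0 → k = n → t = 0) (hfull : ¬(k = n ∧ l = n)) :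
    t + l + a + k + s ≤ 2 * n ^ 2 - n + 1 := by
  wlog hkl : k ≤ l generalizing k l s t
  · have := this l k t s hl hk (by omega) hA' hA hT hS hT0 hS0 (by tauto) (by omega)
    omega
  suffices t + l + a + k + s + n ≤ 2 * n ^ 2 + 1 by
    have : n ≤ 2 * n ^ 2 := by nlinarith
    omega
  obtain ⟨c, rfl⟩ : ∃ c, n = l + c := ⟨n - l, by omega⟩
  obtain ⟨d, rfl⟩ : ∃ d, l = k + d := ⟨l - k, by omega⟩
  simp only [show k + d + c - k = d + c by omega, show k + d + c - (k + d) = c by omega] at *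
  rcases Nat.eq_zero_or_pos k with rfl | hk0
  · rcases Nat.eq_zero_or_pos c with rfl | hc
    · simp only [add_zero, zero_add, true_implies] at hS0
      subst hS0
      nlinarith
    · nlinarith
  · rcases Nat.eq_zero_or_pos c with rfl | hc
    · have hd : 1 ≤ d := by omega
      have : d * k ≤ d * i := Nat.mul_le_mul_left d (by omega)
      nlinarith [Nat.mul_le_mul (show 1 ≤ 2 * k - 1 by omega) (show 0 ≤ d - 1 by omega)]
    · nlinarith

/-- Any proper graded Lie subalgebra `b = ⊕_{i=-2}^2 b_i` of the `|2|`-graded Lie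
algebra `so(n+1,n)` (`n ≥ 3`) has dimension at most `2n² - n + 1 = dim g - (2n - 1)`. -/
theorem stmt6 (n : ℕ) (hn : 3 ≤ n)
    (b : LieSubalgebra ℝ (Matrix (SOIdx n) (SOIdx n) ℝ))
    (hsub : b.toSubmodule ≤ ⨆ d : ℤ, soPiece n d)
    (hgraded : b.toSubmodule = ⨆ d : ℤ, (b.toSubmodule ⊓ soPiece n d))
    (hproper : b.toSubmodule ≠ ⨆ d : ℤ, soPiece n d) :
    Module.finrank ℝ b.toSubmodule ≤ 2 * n ^ 2 - n + 1 := by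
  have hV : finrank ℝ (Fin n → ℝ) = n := finrank_fin_fun ℝ
  have htop {U : Submodule ℝ (Fin n → ℝ)} (hU : finrank ℝ U = n) : U = ⊤ :=
    Submodule.eq_top_of_finrank_eq (hU.trans hV.symm)
  have hS0 (h1 : finrank ℝ (deg1 b) = 0) (hneg1 : finrank ℝ (degNeg1 b) = n) :
      finrank ℝ (deg2 b) = 0 := by
    rw [deg2_eq_bot b (Submodule.finrank_eq_zero.mp h1) (htop hneg1), finrank_bot]
  have hT0 (hneg1 : finrank ℝ (degNeg1 b) = 0) (h1 : finrank ℝ (deg1 b) = n) :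
      finrank ℝ (degNeg2 b) = 0 := by
    rw [degNeg2_eq_bot b (Submodule.finrank_eq_zero.mp hneg1) (htop h1), finrank_bot]
  have hfull : ¬(finrank ℝ (deg1 b) = n ∧ finrank ℝ (degNeg1 b) = n) := fun ⟨h1, hneg1⟩ =>
    hproper <| le_antisymm hsub <| iSup_soPiece_le b (htop h1) (htop hneg1)
  exact (finrank_le_sum_finrank_deg b hgraded).trans <|
    sum_le_of_component_bounds _ _ _ _ _ _ _ _ hn ((Submodule.finrank_le _).trans_eq hV)
      ((Submodule.finrank_le _).trans_eq hV)
      ((Submodule.finrank_add_finrank_le_add_finrank_inf _ _).trans_eq (by rw [hV]))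
      (finrank_deg0_add_le_deg1 b) (finrank_deg0_add_le_degNeg1 b)
      two_mul_finrank_skewMatrices_add_le (finrank_deg2_add_le b) (finrank_degNeg2_add_le b)
      hS0 hT0 hfull
end
end

section
/- In the |3|-graded split real Lie algebra g of type G₂ (with dim g_{±1} = dim g_{±3} = 2, dim g_{±2} = 1, dim g_0 = 4, and the structure: g_0 ≅ gl(g_{-1}), the bracket Λ²g_{±1} → g_{±2} an isomorphism, the bracket g_{±1} ⊗ g_{±2} → g_{±3} a perfect pairing-type isomorphism, g_i and g_{-i} dual g_0-modules), any proper graded Lie subalgebra b = ⊕_{i=-3}^3 b_i has dimension at most 9. -/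
/-!
Through `ad`, the degree-zero part `g₀` is identified with `gl(g₋₁) ≅ gl₂(ℝ)`, and `g₀` is
spanned by `[g₁, g₋₁]`: the image of that span is a Lie ideal of `gl₂` which is neither scalar
nor traceless, because for every `x ∈ g₁` some `0 ≠ z ∈ g₋₁` satisfies
`[[x, y], z] = -tr [x, y] • z` for all `y ∈ g₋₁`. Hence a graded subalgebra containing `g₁` and
`g₋₁` is everything, and the grading element shows that for `0 ≠ u ∈ g_{±2}` the map
`ad u : g_{∓3} → g_{∓1}` is injective, so bijective.

Let `n_d = dim b_d`. If `b₋₁ = g₋₁`, then `b₁ ≠ g₁`, and `b₂ = b₃ = 0` because a nonzero element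
there would bracket `g₋₁` onto `g₁` or `g₂`; so `dim b ≥ 10` forces `b₀ = g₀` and `n₁ = 1`, a
`g₀`-invariant line in `g₁`, which does not exist. The case `b₁ = g₁` is symmetric. Otherwise
`n_{±1} ≤ 1`, and `dim b ≥ 10` forces either such an invariant line, or `b₂ = g₂` and
`b₋₃ = g₋₃` (or the mirror image), whence `b₋₁ ⊇ [g₂, g₋₃] = g₋₁`.
-/

/-- Abstract formulation of the `|3|`-graded split real Lie algebra of type `G₂`:
a real Lie algebra `L` with an internal grading `g : ℤ → Submodule ℝ L` supported in
`[-3,3]`, with `dim g_{±1} = dim g_{±3} = 2`, `dim g_{±2} = 1`, `dim g_0 = 4`, such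
that `g_0` acts faithfully on `g_{-1}` and surjects onto `gl(g_{-1})`, the brackets
`Λ²g_{±1} → g_{±2}` and `g_{±1} ⊗ g_{±2} → g_{±3}` span, bracketing with any nonzero
element of `g_{±2}` surjects `g_{∓1} → g_{±1}`, bracketing with any nonzero element
of `g_{±3}` surjects `g_{∓1} → g_{±2}`, and `g_i`, `g_{-i}` pair nondegenerately. -/
structure G2GradedData (L : Type*) [LieRing L] [LieAlgebra ℝ L]
    (g : ℤ → Submodule ℝ L) : Prop where
  internal : DirectSum.IsInternal g
  supp : ∀ d : ℤ, 3 < |d| → g d = ⊥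
  brGr : ∀ i j : ℤ, ∀ x ∈ g i, ∀ y ∈ g j, ⁅x, y⁆ ∈ g (i + j)
  dim1 : Module.finrank ℝ (g 1) = 2
  dim1' : Module.finrank ℝ (g (-1)) = 2
  dim2 : Module.finrank ℝ (g 2) = 1
  dim2' : Module.finrank ℝ (g (-2)) = 1
  dim3 : Module.finrank ℝ (g 3) = 2
  dim3' : Module.finrank ℝ (g (-3)) = 2
  dim0 : Module.finrank ℝ (g 0) = 4
  faithful0 : ∀ a ∈ g 0, (∀ x ∈ g (-1), ⁅a, x⁆ = (0 : L)) → a = 0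
  full0 : ∀ f : L →ₗ[ℝ] L, (∀ x ∈ g (-1), f x ∈ g (-1)) → (∀ x, f x ∈ g (-1)) →
    ∃ a ∈ g 0, ∀ x ∈ g (-1), ⁅a, x⁆ = f x
  lambda2 : ∀ s : ℤ, s = 1 ∨ s = -1 →
    g (2 * s) ≤ Submodule.span ℝ {z : L | ∃ x ∈ g s, ∃ y ∈ g s, z = ⁅x, y⁆}
  pair12 : ∀ s : ℤ, s = 1 ∨ s = -1 →
    g (3 * s) ≤ Submodule.span ℝ {z : L | ∃ x ∈ g s, ∃ y ∈ g (2 * s), z = ⁅x, y⁆}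
  surj2 : ∀ s : ℤ, s = 1 ∨ s = -1 → ∀ a ∈ g (2 * s), a ≠ 0 →
    ∀ z ∈ g s, ∃ x ∈ g (-s), ⁅a, x⁆ = z
  surj3 : ∀ s : ℤ, s = 1 ∨ s = -1 → ∀ a ∈ g (3 * s), a ≠ 0 →
    ∀ z ∈ g (2 * s), ∃ x ∈ g (-s), ⁅a, x⁆ = z
  dual : ∀ i : ℤ, i ≠ 0 → ∀ x ∈ g i, x ≠ 0 → ∃ y ∈ g (-i), ⁅x, y⁆ ≠ 0

open Module Submodule

section LinearAlgebra

variable {K V W : Type*} [Field K] [AddCommGroup V] [Module K V] [AddCommGroup W] [Module K W]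

theorem LinearMap.injOn_iff_surjOn_of_finrank_eq (f : V →ₗ[K] W) {p : Submodule K V}
    {q : Submodule K W} [FiniteDimensional K p] [FiniteDimensional K q]
    (hpq : finrank K p = finrank K q) (hf : Set.MapsTo f p q) :
    Set.InjOn f p ↔ Set.SurjOn f p q := by
  rw [← hf.restrict_inj, ← hf.restrict_surjective_iff]
  exact LinearMap.injective_iff_surjective_of_finrank_eq_finrank hpq (f := f.restrict hf)

theorem Submodule.le_iff_finrank_inf_eq (p q : Submodule K V) [FiniteDimensional K q] :
    q ≤ p ↔ finrank K ↥(p ⊓ q) = finrank K q :=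
  ⟨fun h => by rw [inf_eq_right.2 h],
    fun h => inf_eq_right.1 (eq_of_le_of_finrank_eq inf_le_right h)⟩

theorem Submodule.exists_mem_ne_zero_of_finrank_ne_zero {p : Submodule K V}
    (hp : finrank K p ≠ 0) : ∃ x ∈ p, x ≠ 0 :=
  exists_mem_ne_zero_of_ne_bot fun h => hp (by rw [h, finrank_bot])

theorem Submodule.exists_smul_eq_of_finrank_eq_one {p : Submodule K V} (hp : finrank K p = 1)
    {v w : V} (hv : v ∈ p) (hv0 : v ≠ 0) (hw : w ∈ p) : ∃ c : K, c • v = w := by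
  obtain ⟨c, hc⟩ :=
    (finrank_eq_one_iff_of_nonzero' (⟨v, hv⟩ : p) (by simpa using hv0)).1 hp ⟨w, hw⟩
  exact ⟨c, congrArg Subtype.val hc⟩

theorem Module.Basis.exists_eq_smul_add_smul {p : Submodule K V} (B : Basis (Fin 2) K p)
    {z : V} (hz : z ∈ p) : ∃ c d : K, z = c • (B 0 : V) + d • (B 1 : V) := by
  have := congrArg Subtype.val (B.sum_repr ⟨z, hz⟩)
  simp only [Fin.sum_univ_two, Submodule.coe_add, Submodule.coe_smul] at this
  exact ⟨_, _, this.symm⟩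

end LinearAlgebra

namespace Matrix

variable {K : Type*} [Field K]

theorem mem_of_trace_eq_zero_of_ne_scalar [NeZero (2 : K)]
    {I : Submodule K (Matrix (Fin 2) (Fin 2) K)} (hI : ∀ A, ∀ N ∈ I, A * N - N * A ∈ I)
    {N : Matrix (Fin 2) (Fin 2) K} (hN : N ∈ I) (hNs : ∀ c : K, N ≠ scalar (Fin 2) c)
    {A : Matrix (Fin 2) (Fin 2) K} (hA : A.trace = 0) : A ∈ I := by
  have of_smul : ∀ {M X : Matrix (Fin 2) (Fin 2) K} (t : K), t ≠ 0 → X ∈ I → t • M = X → M ∈ I := by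
    rintro M X t ht hX rfl
    simpa [smul_smul, inv_mul_cancel₀ ht] using I.smul_mem t⁻¹ hX
  set E : Matrix (Fin 2) (Fin 2) K := !![0, 1; 0, 0]
  set F : Matrix (Fin 2) (Fin 2) K := !![0, 0; 1, 0]
  set H : Matrix (Fin 2) (Fin 2) K := !![1, 0; 0, -1]
  have h2 : (2 : K) ≠ 0 := two_ne_zero
  rw [eta_fin_two N] at hN hNs
  set p := N 0 0; set q := N 0 1; set r := N 1 0; set s := N 1 1
  set N' := !![p, q; r, s]
  have hE : E ∈ I := by
    by_cases hq : q = 0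
    · by_cases hr : r = 0
      · have hps : s - p ≠ 0 := fun hps => hNs p <| by
          ext i j; fin_cases i <;> fin_cases j <;> simp [N', hq, hr]
          linear_combination hps
        exact of_smul _ hps (hI E _ hN) <| by
          ext i j; fin_cases i <;> fin_cases j <;> simp [E, N', hq, hr]
      · exact of_smul (-2 * r) (by simp [hr, h2]) (hI E _ (hI E _ hN)) <| by
          ext i j; fin_cases i <;> fin_cases j <;> simp [E, N']
          ring
    · have hF : F ∈ I := of_smul (-2 * q) (by simp [hq, h2]) (hI F _ (hI F _ hN)) <| by
        ext i j; fin_cases i <;> fin_cases j <;> simp [F, N']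
        ring
      exact of_smul (-2) (by simp [h2]) (hI E _ (hI E _ hF)) <| by
        ext i j; fin_cases i <;> fin_cases j <;> simp [E, F]
        ring
  have hH : H ∈ I := of_smul (-1) (by simp) (hI F _ hE) <| by
    ext i j; fin_cases i <;> fin_cases j <;> simp [E, F, H]
  have hF : F ∈ I := of_smul 2 h2 (hI F _ hH) <| by
    ext i j; fin_cases i <;> fin_cases j <;> simp [F, H]
    ring
  have : A = A 0 1 • E + A 1 0 • F + A 0 0 • H := by
    rw [trace_fin_two] at hA
    ext i j; fin_cases i <;> fin_cases j <;> simp [E, F, H]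
    linear_combination hA
  rw [this]
  exact add_mem (add_mem (I.smul_mem _ hE) (I.smul_mem _ hF)) (I.smul_mem _ hH)

theorem submodule_eq_top_of_trace_ne_zero {n : Type*} [Fintype n] [DecidableEq n]
    (hn : (Fintype.card n : K) ≠ 0) {I : Submodule K (Matrix n n K)}
    (hsl : ∀ A : Matrix n n K, A.trace = 0 → A ∈ I) {N : Matrix n n K} (hN : N ∈ I)
    (hNtr : N.trace ≠ 0) : I = ⊤ := by
  have hcenter : ∀ A : Matrix n n K, A - (A.trace / Fintype.card n) • 1 ∈ I := fun A =>
    hsl _ (by simp [trace_sub, trace_smul, trace_one, div_mul_cancel₀ _ hn])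
  have hone : (1 : Matrix n n K) ∈ I := by
    have := sub_mem hN (hcenter N)
    rw [sub_sub_cancel] at this
    simpa [smul_smul, hNtr, hn] using I.smul_mem (N.trace / Fintype.card n)⁻¹ this
  refine eq_top_iff.2 fun A _ => ?_
  simpa using add_mem (hcenter A) (I.smul_mem (A.trace / Fintype.card n) hone)

end Matrix

section BracketSpan

variable {R L : Type*} [CommRing R] [LieRing L] [LieAlgebra R L]

def bracketSpan (p q : Submodule R L) : Submodule R L :=
  span R {z | ∃ x ∈ p, ∃ y ∈ q, z = ⁅x, y⁆}

theorem bracketSpan_le {p q r : Submodule R L} :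
    bracketSpan p q ≤ r ↔ ∀ x ∈ p, ∀ y ∈ q, ⁅x, y⁆ ∈ r := by
  simp only [bracketSpan, span_le]
  exact ⟨fun h x hx y hy => h ⟨x, hx, y, hy, rfl⟩, fun h _ ⟨x, hx, y, hy, hz⟩ => hz ▸ h x hx y hy⟩

theorem LieSubalgebra.bracketSpan_le {b : LieSubalgebra R L} {p q : Submodule R L}
    (hp : p ≤ b.toSubmodule) (hq : q ≤ b.toSubmodule) : bracketSpan p q ≤ b.toSubmodule :=
  _root_.bracketSpan_le.2 fun _ hx _ hy => b.lie_mem (hp hx) (hq hy)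

theorem bracketSpan_le_eigenspace {e : L} {α β : R} {p q : Submodule R L}
    (hp : p ≤ (LieAlgebra.ad R L e).eigenspace α) (hq : q ≤ (LieAlgebra.ad R L e).eigenspace β) :
    bracketSpan p q ≤ (LieAlgebra.ad R L e).eigenspace (α + β) := by
  refine bracketSpan_le.2 fun x hx y hy => ?_
  have hx' := hp hx
  have hy' := hq hy
  simp only [Module.End.mem_eigenspace_iff, LieAlgebra.ad_apply] at hx' hy' ⊢
  rw [leibniz_lie, hx', hy', smul_lie, lie_smul, add_smul]

theorem lie_smul_add_smul (u v : L) (c d c' d' : R) :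
    ⁅c • u + d • v, c' • u + d' • v⁆ = (c * d' - d * c') • ⁅u, v⁆ := by
  simp only [add_lie, lie_add, smul_lie, lie_smul, lie_self, ← lie_skew u v]
  module

end BracketSpan

namespace G2GradedData

variable {L : Type*} [LieRing L] [LieAlgebra ℝ L] {g : ℤ → Submodule ℝ L}

theorem lie_mem (h : G2GradedData L g) {i j k : ℤ} (hk : i + j = k) {x y : L} (hx : x ∈ g i)
    (hy : y ∈ g j) : ⁅x, y⁆ ∈ g k :=
  hk ▸ h.brGr i j x hx y hy

theorem lie_eq_zero (h : G2GradedData L g) {i j : ℤ} (hij : 3 < |i + j|) {x y : L}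
    (hx : x ∈ g i) (hy : y ∈ g j) : ⁅x, y⁆ = 0 := by
  simpa [h.supp _ hij] using h.brGr i j x hx y hy

theorem le_bracketSpan_two_mul (h : G2GradedData L g) {s d : ℤ} (hs : s = 1 ∨ s = -1)
    (hd : 2 * s = d) : g d ≤ bracketSpan (g s) (g s) :=
  hd ▸ h.lambda2 s hs

theorem le_bracketSpan_three_mul (h : G2GradedData L g) {s d e : ℤ} (hs : s = 1 ∨ s = -1)
    (hd : 3 * s = d) (he : 2 * s = e) : g d ≤ bracketSpan (g s) (g e) :=
  hd ▸ he ▸ h.pair12 s hs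

theorem iSup_eq_finset_sup (h : G2GradedData L g) {f : ℤ → Submodule ℝ L}
    (hf : ∀ d, f d ≤ g d) : ⨆ d, f d = (Finset.Icc (-3) 3).sup f := by
  refine le_antisymm (iSup_le fun d => ?_) (Finset.sup_le fun d _ => le_iSup f d)
  by_cases hd : d ∈ Finset.Icc (-3) 3
  · exact Finset.le_sup hd
  · have : 3 < |d| := by rw [Finset.mem_Icc] at hd; rw [lt_abs]; omega
    exact (hf d).trans ((h.supp d this).le.trans bot_le)

theorem finiteDimensional (h : G2GradedData L g) : FiniteDimensional ℝ L := by
  have hfin : ∀ d, FiniteDimensional ℝ (g d) := fun d => by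
    by_cases hd : 3 < |d|
    · rw [h.supp d hd]; infer_instance
    · apply Module.finite_of_finrank_pos
      rw [not_lt, abs_le] at hd
      rcases (by omega : d = -3 ∨ d = -2 ∨ d = -1 ∨ d = 0 ∨ d = 1 ∨ d = 2 ∨ d = 3) with
        rfl | rfl | rfl | rfl | rfl | rfl | rfl <;>
      simp [h.dim1, h.dim1', h.dim2, h.dim2', h.dim3, h.dim3', h.dim0]
  have htop : (Finset.Icc (-3) 3).sup g = ⊤ := by
    rw [← h.iSup_eq_finset_sup fun _ => le_rfl, h.internal.submodule_iSup_eq_top]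
  have : FiniteDimensional ℝ ↥(⊤ : Submodule ℝ L) := by rw [← htop]; infer_instance
  exact Submodule.topEquiv.finiteDimensional

theorem finrank_le_sum_finrank_inf (h : G2GradedData L g) {p : Submodule ℝ L}
    (hp : p = ⨆ d, p ⊓ g d) :
    finrank ℝ p ≤ ∑ d ∈ Finset.Icc (-3) 3, finrank ℝ ↥(p ⊓ g d) := by
  have := h.finiteDimensional
  have hp' : p = (Finset.Icc (-3) 3).sup fun d => p ⊓ g d :=
    hp.trans (h.iSup_eq_finset_sup fun _ => inf_le_right)
  calc finrank ℝ p = finrank ℝ ↥((Finset.Icc (-3) 3).sup fun d => p ⊓ g d) := by rw [← hp']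
    _ ≤ _ := Finset.apply_sup_le_sum (f := fun q : Submodule ℝ L => finrank ℝ q) (finrank_bot ℝ L)
      (fun {s t} => finrank_add_le_finrank_add_finrank s t) _

noncomputable def projNegOne (h : G2GradedData L g) : L →ₗ[ℝ] g (-1) :=
  letI := h.internal.chooseDecomposition
  DirectSum.component ℝ ℤ (fun i => g i) (-1) ∘ₗ (DirectSum.decomposeLinearEquiv g).toLinearMap

theorem projNegOne_apply (h : G2GradedData L g) {x : L} (hx : x ∈ g (-1)) :
    (h.projNegOne x : L) = x :=
  letI := h.internal.chooseDecomposition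
  DirectSum.decompose_of_mem_same g hx

noncomputable def adRestrict (h : G2GradedData L g) : L →ₗ[ℝ] Module.End ℝ (g (-1)) where
  toFun a := h.projNegOne ∘ₗ LieAlgebra.ad ℝ L a ∘ₗ (g (-1)).subtype
  map_add' a b := by ext; simp
  map_smul' c a := by ext; simp

theorem adRestrict_apply (h : G2GradedData L g) {a : L} (ha : a ∈ g 0) (x : g (-1)) :
    (h.adRestrict a x : L) = ⁅a, (x : L)⁆ :=
  h.projNegOne_apply (h.lie_mem (by norm_num) ha x.2)

theorem exists_adRestrict_eq (h : G2GradedData L g) (T : Module.End ℝ (g (-1))) :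
    ∃ a ∈ g 0, h.adRestrict a = T := by
  obtain ⟨a, ha, hT⟩ := h.full0 ((g (-1)).subtype ∘ₗ T ∘ₗ h.projNegOne)
    (fun _ _ => (T _).2) fun _ => (T _).2
  refine ⟨a, ha, LinearMap.ext fun x => Subtype.ext ?_⟩
  rw [h.adRestrict_apply ha, hT x x.2]
  simp [Subtype.ext (h.projNegOne_apply x.2)]

noncomputable def negOneBasis (h : G2GradedData L g) : Basis (Fin 2) ℝ (g (-1)) :=
  letI := h.finiteDimensional
  Module.finBasisOfFinrankEq ℝ _ h.dim1'

/-- The matrix of `ad a` on `g (-1)`; it describes `ad a` only for `a ∈ g 0`. -/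
noncomputable def rep (h : G2GradedData L g) : L →ₗ[ℝ] Matrix (Fin 2) (Fin 2) ℝ :=
  (LinearMap.toMatrixAlgEquiv h.negOneBasis).toLinearMap ∘ₗ h.adRestrict

theorem exists_rep_eq (h : G2GradedData L g) (M : Matrix (Fin 2) (Fin 2) ℝ) :
    ∃ a ∈ g 0, h.rep a = M := by
  obtain ⟨a, ha, hT⟩ := h.exists_adRestrict_eq ((LinearMap.toMatrixAlgEquiv h.negOneBasis).symm M)
  exact ⟨a, ha, by simp [rep, hT]⟩

theorem rep_lie (h : G2GradedData L g) {a b : L} (ha : a ∈ g 0) (hb : b ∈ g 0) :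
    h.rep ⁅a, b⁆ = h.rep a * h.rep b - h.rep b * h.rep a := by
  have : h.adRestrict ⁅a, b⁆ =
      h.adRestrict a * h.adRestrict b - h.adRestrict b * h.adRestrict a := by
    ext x
    simp [h.adRestrict_apply (h.lie_mem (by norm_num) ha hb), h.adRestrict_apply ha,
      h.adRestrict_apply hb, lie_lie]
  simp [rep, this]

theorem rep_injOn (h : G2GradedData L g) : Set.InjOn h.rep (g 0) := by
  intro a ha b hb hab
  rw [← sub_eq_zero]
  have hab' : h.adRestrict (a - b) = 0 :=
    (LinearMap.toMatrixAlgEquiv h.negOneBasis).injective (by simpa [rep, sub_eq_zero] using hab)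
  refine h.faithful0 _ (sub_mem ha hb) fun x hx => ?_
  simpa [h.adRestrict_apply ha, h.adRestrict_apply hb] using
    congrArg (fun T => (T ⟨x, hx⟩ : L)) hab'

theorem lie_eq_smul_of_rep_eq_scalar (h : G2GradedData L g) {a : L} (ha : a ∈ g 0) {c : ℝ}
    (hc : h.rep a = Matrix.scalar (Fin 2) c) {w : L} (hw : w ∈ g (-1)) : ⁅a, w⁆ = c • w := by
  have : h.adRestrict a = algebraMap ℝ _ c :=
    (LinearMap.toMatrixAlgEquiv h.negOneBasis).injective (by rw [AlgEquiv.commutes]; exact hc)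
  simpa [this] using (h.adRestrict_apply ha ⟨w, hw⟩).symm

theorem lie_negOneBasis (h : G2GradedData L g) {a : L} (ha : a ∈ g 0) (j : Fin 2) :
    ⁅a, (h.negOneBasis j : L)⁆ = ∑ i, h.rep a i j • (h.negOneBasis i : L) := by
  rw [← h.adRestrict_apply ha]
  conv_lhs => rw [← h.negOneBasis.sum_repr (h.adRestrict a (h.negOneBasis j))]
  simp only [Submodule.coe_sum, Submodule.coe_smul, rep, LinearMap.coe_comp, Function.comp_apply,
    AlgEquiv.toLinearMap_apply, LinearMap.toMatrixAlgEquiv_apply]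

theorem le_span_lie_negOneBasis (h : G2GradedData L g) :
    g (-2) ≤ ℝ ∙ ⁅(h.negOneBasis 0 : L), (h.negOneBasis 1 : L)⁆ := by
  refine (h.le_bracketSpan_two_mul (.inr rfl) (by norm_num)).trans
    (bracketSpan_le.2 fun x hx y hy => ?_)
  obtain ⟨c, d, rfl⟩ := h.negOneBasis.exists_eq_smul_add_smul hx
  obtain ⟨c', d', rfl⟩ := h.negOneBasis.exists_eq_smul_add_smul hy
  rw [lie_smul_add_smul]
  exact smul_mem _ _ (mem_span_singleton_self _)

theorem lie_negOneBasis_ne_zero (h : G2GradedData L g) :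
    ⁅(h.negOneBasis 0 : L), (h.negOneBasis 1 : L)⁆ ≠ 0 := by
  intro h0
  have hbot : g (-2) = ⊥ := eq_bot_iff.2 (h.le_span_lie_negOneBasis.trans (by simp [h0]))
  have := h.dim2'
  rw [hbot, finrank_bot] at this
  exact zero_ne_one this

theorem lie_eq_trace_smul (h : G2GradedData L g) {a v : L} (ha : a ∈ g 0) (hv : v ∈ g (-2)) :
    ⁅a, v⁆ = (h.rep a).trace • v := by
  obtain ⟨c, rfl⟩ := mem_span_singleton.1 (h.le_span_lie_negOneBasis hv)
  rw [lie_smul, leibniz_lie, h.lie_negOneBasis ha, h.lie_negOneBasis ha, Fin.sum_univ_two,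
    Fin.sum_univ_two, Matrix.trace_fin_two]
  simp only [add_lie, smul_lie, lie_add, lie_smul, lie_self]
  module

theorem exists_lie_ne_zero (h : G2GradedData L g) {z : L} (hz : z ∈ g (-1)) (hz0 : z ≠ 0) :
    ∃ z' ∈ g (-1), ⁅z, z'⁆ ≠ 0 := by
  obtain ⟨c, d, rfl⟩ := h.negOneBasis.exists_eq_smul_add_smul hz
  by_contra! H
  have hu := h.lie_negOneBasis_ne_zero
  have hu' : ⁅(h.negOneBasis 1 : L), (h.negOneBasis 0 : L)⁆ ≠ 0 := by
    rwa [← lie_skew, neg_ne_zero]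
  have e0 := H _ (h.negOneBasis 0).2
  have e1 := H _ (h.negOneBasis 1).2
  simp only [add_lie, smul_lie, lie_self, smul_zero, zero_add, add_zero, smul_eq_zero] at e0 e1
  simp [e0.resolve_right hu', e1.resolve_right hu] at hz0

theorem exists_eq_smul_add_smul_of_lie_ne_zero (h : G2GradedData L g) {z z' w : L}
    (hz : z ∈ g (-1)) (hz' : z' ∈ g (-1)) (hzz' : ⁅z, z'⁆ ≠ 0) (hw : w ∈ g (-1)) :
    ∃ α β : ℝ, w = α • z + β • z' := by
  obtain ⟨c, d, rfl⟩ := h.negOneBasis.exists_eq_smul_add_smul hz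
  obtain ⟨c', d', rfl⟩ := h.negOneBasis.exists_eq_smul_add_smul hz'
  obtain ⟨e, f, rfl⟩ := h.negOneBasis.exists_eq_smul_add_smul hw
  rw [lie_smul_add_smul, smul_ne_zero_iff] at hzz'
  set δ := c * d' - d * c' with hδ
  refine ⟨(e * d' - f * c') / δ, (c * f - d * e) / δ, ?_⟩
  match_scalars <;> field_simp [hzz'.1] <;> rw [hδ] <;> ring

theorem exists_lie_lie_eq_neg_trace_smul (h : G2GradedData L g) {x : L} (hx : x ∈ g 1) :
    ∃ z ∈ g (-1), z ≠ 0 ∧ ∀ y ∈ g (-1), ⁅⁅x, y⁆, z⁆ = -(h.rep ⁅x, y⁆).trace • z := by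
  have := h.finiteDimensional
  set u := ⁅(h.negOneBasis 0 : L), (h.negOneBasis 1 : L)⁆
  have hu : u ∈ g (-2) := h.lie_mem (by norm_num) (h.negOneBasis 0).2 (h.negOneBasis 1).2
  have hinj : Set.InjOn (LieAlgebra.ad ℝ L u) (g (-1)) := by
    refine (LinearMap.injOn_iff_surjOn_of_finrank_eq (q := g (-3)) _ (h.dim1'.trans h.dim3'.symm)
      fun z hz => h.lie_mem (by norm_num) hu hz).2 fun w hw => ?_
    have hle : g (-3) ≤ (g (-1)).map (LieAlgebra.ad ℝ L u) :=
      (h.le_bracketSpan_three_mul (e := -2) (.inr rfl) (by norm_num) (by norm_num)).trans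
        (bracketSpan_le.2 fun y hy v hv => ?_)
    · exact hle hw
    obtain ⟨c, rfl⟩ := mem_span_singleton.1 (h.le_span_lie_negOneBasis hv)
    exact ⟨-c • y, smul_mem _ _ hy, by
      rw [LieAlgebra.ad_apply, lie_smul, lie_smul, ← lie_skew y u, smul_neg, neg_smul]⟩
  -- `ad u : g (-1) → g (-3)` is injective, and `z` is chosen so that `x` kills `⁅u, z⁆`.
  -- Then each `⁅x, y⁆` kills `⁅u, z⁆ ∈ g (-3)` too, and `⁅⁅x, y⁆, ⁅u, z⁆⁆` equals
  -- `⁅u, ⁅⁅x, y⁆, z⁆ + tr • z⁆` because `⁅x, y⁆` acts on the line `g (-2)` by its trace.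
  obtain ⟨z, hz, hz0, hxz⟩ : ∃ z ∈ g (-1), z ≠ 0 ∧ ⁅x, ⁅u, z⁆⁆ = 0 := by
    let f : g (-1) →ₗ[ℝ] g (-2) := (LieAlgebra.ad ℝ L x ∘ₗ LieAlgebra.ad ℝ L u).restrict
      fun z hz => h.lie_mem (by norm_num) hx (h.lie_mem (k := -3) (by norm_num) hu hz)
    obtain ⟨⟨z, hz⟩, hker, hz0⟩ := exists_mem_ne_zero_of_ne_bot
      (LinearMap.ker_ne_bot_of_finrank_lt (f := f) (by rw [h.dim1', h.dim2']; norm_num))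
    exact ⟨z, hz, by simpa using hz0, congrArg Subtype.val hker⟩
  refine ⟨z, hz, hz0, fun y hy => ?_⟩
  have ha : ⁅x, y⁆ ∈ g 0 := h.lie_mem (by norm_num) hx hy
  have huz : ⁅u, z⁆ ∈ g (-3) := h.lie_mem (by norm_num) hu hz
  have hkill : ⁅⁅x, y⁆, ⁅u, z⁆⁆ = 0 := by
    rw [lie_lie, hxz, lie_zero, h.lie_eq_zero (by norm_num) hy huz, lie_zero, sub_zero]
  rw [leibniz_lie, h.lie_eq_trace_smul ha hu, smul_lie, ← lie_smul, ← lie_add] at hkill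
  have := hinj (add_mem (smul_mem _ _ hz) (h.lie_mem (by norm_num) ha hz)) (zero_mem _)
    (by simpa using hkill)
  rw [neg_smul, eq_neg_iff_add_eq_zero, add_comm, this]

theorem finrank_le_one_of_forall_lie_eq_zero (h : G2GradedData L g) {z : L} (hz : z ∈ g (-1))
    (hz0 : z ≠ 0) {K : Submodule ℝ L} (hK : ∀ a ∈ K, a ∈ g 0 ∧ ⁅a, z⁆ = 0 ∧ (h.rep a).trace = 0) :
    finrank ℝ K ≤ 1 := by
  have := h.finiteDimensional
  obtain ⟨z', hz', hzz'⟩ := h.exists_lie_ne_zero hz hz0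
  -- A traceless `a` killing `z` also kills `⁅z, z'⁆`, which forces `⁅a, z'⁆ ∈ ℝ ∙ z`;
  -- so `a ↦ ⁅a, z'⁆` embeds `K` into the line `ℝ ∙ z`.
  have hmaps : ∀ a ∈ K, ⁅a, z'⁆ ∈ ℝ ∙ z := by
    intro a haK
    obtain ⟨ha, haz, htr⟩ := hK a haK
    obtain ⟨α, β, hαβ⟩ := h.exists_eq_smul_add_smul_of_lie_ne_zero hz hz' hzz'
      (h.lie_mem (by norm_num) ha hz')
    have hβ : ⁅a, ⁅z, z'⁆⁆ = 0 := by
      rw [h.lie_eq_trace_smul ha (h.lie_mem (by norm_num) hz hz'), htr, zero_smul]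
    rw [leibniz_lie, haz, zero_lie, zero_add, hαβ, lie_add, lie_smul, lie_smul, lie_self,
      smul_zero, zero_add, smul_eq_zero] at hβ
    rw [hαβ, hβ.resolve_right hzz', zero_smul, add_zero]
    exact smul_mem _ _ (mem_span_singleton_self z)
  let f : K →ₗ[ℝ] ℝ ∙ z := (-LieAlgebra.ad ℝ L z').restrict fun a ha => by
    simpa [lie_skew] using hmaps a ha
  have hf : Function.Injective f := by
    rw [← LinearMap.ker_eq_bot, eq_bot_iff]
    rintro ⟨a, haK⟩ hfa
    obtain ⟨ha, haz, -⟩ := hK a haK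
    have haz' : ⁅a, z'⁆ = 0 := by simpa [f, lie_skew] using congrArg Subtype.val hfa
    refine (mem_bot ℝ).2 (Subtype.ext (h.faithful0 a ha fun w hw => ?_))
    obtain ⟨α, β, rfl⟩ := h.exists_eq_smul_add_smul_of_lie_ne_zero hz hz' hzz' hw
    simp [haz, haz']
  simpa [finrank_span_singleton hz0] using LinearMap.finrank_le_finrank_of_injective hf

theorem exists_rep_lie_ne_scalar (h : G2GradedData L g) :
    ∃ x ∈ g 1, ∃ y ∈ g (-1), ∀ c : ℝ, h.rep ⁅x, y⁆ ≠ Matrix.scalar (Fin 2) c := by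
  obtain ⟨x, hx, hx0⟩ := exists_mem_ne_zero_of_finrank_ne_zero (by rw [h.dim1]; norm_num)
  obtain ⟨z, hz, hz0, hxz⟩ := h.exists_lie_lie_eq_neg_trace_smul hx
  obtain ⟨y, hy, hxy⟩ := h.dual 1 one_ne_zero x hx hx0
  refine ⟨x, hx, y, hy, fun c hc => hxy ?_⟩
  have ha : ⁅x, y⁆ ∈ g 0 := h.lie_mem (by norm_num) hx hy
  have hc0 : (3 * c) • z = 0 := by
    have := hxz y hy
    rw [h.lie_eq_smul_of_rep_eq_scalar ha hc hz, hc] at this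
    simp only [Matrix.trace_fin_two, Matrix.scalar_apply, Matrix.diagonal_apply_eq] at this
    rw [show (3 * c) • z = c • z - (-(c + c)) • z by module, this, sub_self]
  have : c = 0 := by simpa [hz0] using hc0
  exact h.rep_injOn ha (zero_mem _) (by simp [hc, this])

theorem exists_line_of_forall_trace_eq_zero (h : G2GradedData L g) {x : L} (hx : x ∈ g 1)
    (htr : ∀ y ∈ g (-1), (h.rep ⁅x, y⁆).trace = 0) :
    ∃ K : Submodule ℝ L, finrank ℝ K ≤ 1 ∧ ∀ y ∈ g (-1), ⁅x, y⁆ ∈ K := by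
  obtain ⟨z, hz, hz0, hxz⟩ := h.exists_lie_lie_eq_neg_trace_smul hx
  let K := g 0 ⊓ LinearMap.ker (LieAlgebra.ad ℝ L z) ⊓
    LinearMap.ker (Matrix.traceLinearMap (Fin 2) ℝ ℝ ∘ₗ h.rep)
  have hK : ∀ a, a ∈ K ↔ a ∈ g 0 ∧ ⁅a, z⁆ = 0 ∧ (h.rep a).trace = 0 := fun a => by
    simp only [K, mem_inf, LinearMap.mem_ker, LieAlgebra.ad_apply, LinearMap.comp_apply,
      Matrix.traceLinearMap_apply, ← lie_skew a z, neg_eq_zero, and_assoc]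
  refine ⟨K, h.finrank_le_one_of_forall_lie_eq_zero hz hz0 fun a ha => (hK a).1 ha,
    fun y hy => (hK _).2 ⟨h.lie_mem (by norm_num) hx hy, ?_, htr y hy⟩⟩
  rw [hxz y hy, htr y hy, neg_zero, zero_smul]

theorem exists_trace_rep_lie_ne_zero (h : G2GradedData L g)
    (hsl : ∀ A : Matrix (Fin 2) (Fin 2) ℝ, A.trace = 0 →
      A ∈ (bracketSpan (g 1) (g (-1))).map h.rep) :
    ∃ x ∈ g 1, ∃ y ∈ g (-1), (h.rep ⁅x, y⁆).trace ≠ 0 := by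
  have := h.finiteDimensional
  -- Otherwise `[g 1, g (-1)]` lies in the sum of two lines, but its image under `rep` contains
  -- the three-dimensional space of traceless matrices.
  by_contra! htr
  let B := Module.finBasisOfFinrankEq ℝ (g 1) h.dim1
  obtain ⟨K₁, hK₁, hx₁⟩ := h.exists_line_of_forall_trace_eq_zero (B 0).2 (htr _ (B 0).2)
  obtain ⟨K₂, hK₂, hx₂⟩ := h.exists_line_of_forall_trace_eq_zero (B 1).2 (htr _ (B 1).2)
  have hle : bracketSpan (g 1) (g (-1)) ≤ K₁ ⊔ K₂ := bracketSpan_le.2 fun x hx y hy => by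
    obtain ⟨c, d, rfl⟩ := B.exists_eq_smul_add_smul hx
    rw [add_lie, smul_lie, smul_lie]
    exact add_mem_sup (smul_mem _ _ (hx₁ y hy)) (smul_mem _ _ (hx₂ y hy))
  have hsl_dim : 3 ≤ finrank ℝ (LinearMap.ker (Matrix.traceLinearMap (Fin 2) ℝ ℝ)) := by
    have := LinearMap.finrank_range_add_finrank_ker (Matrix.traceLinearMap (Fin 2) ℝ ℝ)
    have := (LinearMap.range (Matrix.traceLinearMap (Fin 2) ℝ ℝ)).finrank_le
    simp only [Module.finrank_matrix, Fintype.card_fin, Module.finrank_self] at *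
    omega
  have := (hsl_dim.trans (finrank_mono fun A hA => hsl A hA)).trans (finrank_map_le _ _)
  have := (finrank_mono hle).trans (finrank_add_le_finrank_add_finrank K₁ K₂)
  omega

theorem g_zero_le_bracketSpan (h : G2GradedData L g) : g 0 ≤ bracketSpan (g 1) (g (-1)) := by
  set m := bracketSpan (g 1) (g (-1))
  have hm0 : m ≤ g 0 := bracketSpan_le.2 fun x hx y hy => h.lie_mem (by norm_num) hx hy
  have hideal : ∀ A, ∀ N ∈ m.map h.rep, A * N - N * A ∈ m.map h.rep := by
    rintro A _ ⟨c, hc, rfl⟩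
    obtain ⟨a, ha, rfl⟩ := h.exists_rep_eq A
    have hstable : m ≤ m.comap (LieAlgebra.ad ℝ L a) := bracketSpan_le.2 fun x hx y hy => by
      rw [mem_comap, LieAlgebra.ad_apply, leibniz_lie]
      exact add_mem (subset_span ⟨_, h.lie_mem (by norm_num) ha hx, y, hy, rfl⟩)
        (subset_span ⟨x, hx, _, h.lie_mem (by norm_num) ha hy, rfl⟩)
    exact ⟨⁅a, c⁆, hstable hc, h.rep_lie ha (hm0 hc)⟩
  obtain ⟨x, hx, y, hy, hns⟩ := h.exists_rep_lie_ne_scalar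
  have hsl : ∀ A : Matrix (Fin 2) (Fin 2) ℝ, A.trace = 0 → A ∈ m.map h.rep := fun A hA =>
    Matrix.mem_of_trace_eq_zero_of_ne_scalar hideal
      (mem_map_of_mem (subset_span ⟨x, hx, y, hy, rfl⟩)) hns hA
  obtain ⟨x', hx', y', hy', htr⟩ := h.exists_trace_rep_lie_ne_zero hsl
  have htop := Matrix.submodule_eq_top_of_trace_ne_zero (by norm_num) hsl
    (mem_map_of_mem (subset_span ⟨x', hx', y', hy', rfl⟩)) htr
  intro a ha
  obtain ⟨c, hc, hca⟩ : h.rep a ∈ m.map h.rep := htop ▸ mem_top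
  rwa [h.rep_injOn ha (hm0 hc) hca.symm]

theorem le_eigenspace_two_mul (h : G2GradedData L g) {e : L} {s : ℤ} (hs : s = 1 ∨ s = -1)
    (hle : g s ≤ (LieAlgebra.ad ℝ L e).eigenspace (s : ℝ)) :
    g (2 * s) ≤ (LieAlgebra.ad ℝ L e).eigenspace ((2 * s : ℤ) : ℝ) := by
  refine (h.le_bracketSpan_two_mul hs rfl).trans ((bracketSpan_le_eigenspace hle hle).trans ?_)
  rw [Int.cast_mul, Int.cast_ofNat, two_mul]

theorem le_eigenspace_three_mul (h : G2GradedData L g) {e : L} {s : ℤ} (hs : s = 1 ∨ s = -1)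
    (hle : g s ≤ (LieAlgebra.ad ℝ L e).eigenspace (s : ℝ)) :
    g (3 * s) ≤ (LieAlgebra.ad ℝ L e).eigenspace ((3 * s : ℤ) : ℝ) := by
  refine (h.le_bracketSpan_three_mul hs rfl rfl).trans
    ((bracketSpan_le_eigenspace hle (h.le_eigenspace_two_mul hs hle)).trans ?_)
  rw [Int.cast_mul, Int.cast_mul, Int.cast_ofNat, Int.cast_ofNat]
  ring_nf
  exact le_rfl

theorem exists_lie_eq_intCast_smul (h : G2GradedData L g) :
    ∃ e ∈ g 0, ∀ d : ℤ, ∀ x ∈ g d, ⁅e, x⁆ = (d : ℝ) • x := by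
  obtain ⟨e, he, heT⟩ := h.exists_adRestrict_eq (-1)
  let E : ℤ → Submodule ℝ L := fun d => (LieAlgebra.ad ℝ L e).eigenspace d
  suffices hE : ∀ d, g d ≤ E d from
    ⟨e, he, fun d x hx => by simpa [E, Module.End.mem_eigenspace_iff] using hE d hx⟩
  have hneg : ∀ x ∈ g (-1), ⁅e, x⁆ = -x := fun x hx => by
    simpa [heT] using (h.adRestrict_apply he ⟨x, hx⟩).symm
  have hneg' : g (-1) ≤ E (-1) := fun x hx => by
    simpa [E, Module.End.mem_eigenspace_iff] using hneg x hx
  have hzero : ∀ a ∈ g 0, ⁅e, a⁆ = 0 := fun a ha => by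
    refine h.faithful0 _ (h.lie_mem (by norm_num) he ha) fun x hx => ?_
    rw [lie_lie, hneg x hx, lie_neg, hneg _ (h.lie_mem (by norm_num) ha hx), sub_neg_eq_add,
      neg_add_cancel]
  have hone : g 1 ≤ E 1 := fun x hx => by
    simp only [E, Module.End.mem_eigenspace_iff, LieAlgebra.ad_apply, Int.cast_one, one_smul]
    by_contra hne
    obtain ⟨y, hy, hxy⟩ := h.dual 1 one_ne_zero _ (sub_mem (h.lie_mem (by norm_num) he hx) hx)
      (sub_ne_zero.2 hne)
    apply hxy
    rw [sub_lie, lie_lie, hzero _ (h.lie_mem (by norm_num) hx hy), hneg y hy, lie_neg,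
      sub_neg_eq_add, zero_add, sub_self]
  intro d
  by_cases hd : 3 < |d|
  · simp [h.supp d hd]
  rw [not_lt, abs_le] at hd
  rcases (by omega : d = -3 ∨ d = -2 ∨ d = -1 ∨ d = 0 ∨ d = 1 ∨ d = 2 ∨ d = 3) with
    rfl | rfl | rfl | rfl | rfl | rfl | rfl
  · exact h.le_eigenspace_three_mul (.inr rfl) hneg'
  · exact h.le_eigenspace_two_mul (.inr rfl) hneg'
  · exact hneg'
  · exact fun a ha => by simpa [E, Module.End.mem_eigenspace_iff] using hzero a ha
  · exact hone
  · exact h.le_eigenspace_two_mul (.inl rfl) hone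
  · exact h.le_eigenspace_three_mul (.inl rfl) hone

theorem eq_zero_of_forall_lie_eq_zero (h : G2GradedData L g) {d : ℤ} (hd : d ≠ 0) {w : L}
    (hw : w ∈ g d) (h₁ : ∀ x ∈ g 1, ⁅x, w⁆ = 0) (h₂ : ∀ y ∈ g (-1), ⁅y, w⁆ = 0) : w = 0 := by
  obtain ⟨e, he, hed⟩ := h.exists_lie_eq_intCast_smul
  have hg0 : g 0 ≤ LinearMap.ker (LieAlgebra.ad ℝ L w) :=
    h.g_zero_le_bracketSpan.trans (bracketSpan_le.2 fun x hx y hy => by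
      rw [LinearMap.mem_ker, LieAlgebra.ad_apply, leibniz_lie, ← lie_skew w x, h₁ x hx,
        ← lie_skew w y, h₂ y hy]
      simp)
  have := hg0 he
  rw [LinearMap.mem_ker, LieAlgebra.ad_apply, ← lie_skew, hed d w hw, neg_eq_zero,
    smul_eq_zero] at this
  exact this.resolve_left (by exact_mod_cast hd)

theorem eq_zero_of_lie_eq_zero (h : G2GradedData L g) {s : ℤ} (hs : s = 1 ∨ s = -1) {u w : L}
    (hu : u ∈ g (2 * s)) (hu0 : u ≠ 0) (hw : w ∈ g (-3 * s)) (huw : ⁅u, w⁆ = 0) : w = 0 := by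
  have habs : ∀ t : ℤ, t = 1 ∨ t = -1 → 3 < |t + -3 * s| ∨ t = s := by
    rintro t (rfl | rfl) <;> rcases hs with rfl | rfl <;> norm_num
  have hkill : ∀ t : ℤ, t = 1 ∨ t = -1 → ∀ x ∈ g t, ⁅x, w⁆ = 0 := by
    intro t ht x hx
    rcases habs t ht with hlt | rfl
    · exact h.lie_eq_zero hlt hx hw
    obtain ⟨y, hy, rfl⟩ := h.surj2 t ht u hu hu0 x hx
    have hlt : 3 < |-t + -3 * t| := by rcases ht with rfl | rfl <;> norm_num
    rw [lie_lie, huw, lie_zero, h.lie_eq_zero hlt hy hw, lie_zero, sub_zero]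
  exact h.eq_zero_of_forall_lie_eq_zero (by rcases hs with rfl | rfl <;> norm_num) hw
    (hkill 1 (.inl rfl)) (hkill (-1) (.inr rfl))

theorem surjOn_ad (h : G2GradedData L g) {s : ℤ} (hs : s = 1 ∨ s = -1) {u : L}
    (hu : u ∈ g (2 * s)) (hu0 : u ≠ 0) :
    Set.SurjOn (LieAlgebra.ad ℝ L u) (g (-3 * s)) (g (-s)) := by
  have := h.finiteDimensional
  refine (LinearMap.injOn_iff_surjOn_of_finrank_eq _ ?_
    fun w hw => h.lie_mem (by ring) hu hw).1 fun w hw w' hw' hww' => ?_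
  · rcases hs with rfl | rfl
    · simp [h.dim3', h.dim1']
    · simp [h.dim3, h.dim1]
  rw [← sub_eq_zero]
  exact h.eq_zero_of_lie_eq_zero hs hu hu0 (sub_mem hw hw') (by simpa [sub_eq_zero] using hww')

theorem exists_lie_notMem_span_of_mem_neg_one (h : G2GradedData L g) {y : L} (hy : y ∈ g (-1))
    (hy0 : y ≠ 0) : ∃ a ∈ g 0, ⁅a, y⁆ ∉ ℝ ∙ y := by
  obtain ⟨y', hy', hyy'⟩ := h.exists_lie_ne_zero hy hy0
  obtain ⟨φ, hφ⟩ : ∃ φ : Module.Dual ℝ (g (-1)), φ ⟨y, hy⟩ ≠ 0 := by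
    by_contra! H
    exact hy0 (by simpa using (Module.forall_dual_apply_eq_zero_iff ℝ (⟨y, hy⟩ : g (-1))).1 H)
  obtain ⟨a, ha, haT⟩ := h.exists_adRestrict_eq (φ.smulRight ⟨y', hy'⟩)
  refine ⟨a, ha, fun hmem => hyy' ?_⟩
  have hay : ⁅a, y⁆ = φ ⟨y, hy⟩ • y' := by
    rw [← h.adRestrict_apply ha ⟨y, hy⟩, haT]
    simp
  obtain ⟨c, hc⟩ := mem_span_singleton.1 hmem
  have : y' = ((φ ⟨y, hy⟩)⁻¹ * c) • y := by
    rw [mul_smul, hc, hay, smul_smul, inv_mul_cancel₀ hφ, one_smul]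
  rw [this, lie_smul, lie_self, smul_zero]

theorem exists_lie_notMem_span (h : G2GradedData L g) {s : ℤ} (hs : s = 1 ∨ s = -1) {x : L}
    (hx : x ∈ g s) (hx0 : x ≠ 0) : ∃ a ∈ g 0, ⁅a, x⁆ ∉ ℝ ∙ x := by
  rcases hs with rfl | rfl
  · -- For `0 ≠ u ∈ g 2`, `ad u : g (-1) → g 1` is bijective and intertwines the actions of `g 0`
    -- up to the scalar by which `g 0` acts on the line `g 2`.
    have := h.finiteDimensional
    obtain ⟨u, hu, hu0⟩ := exists_mem_ne_zero_of_finrank_ne_zero (p := g 2)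
      (by rw [h.dim2]; norm_num)
    obtain ⟨y, hy, rfl⟩ := h.surj2 1 (.inl rfl) u hu hu0 x hx
    have hinj : Set.InjOn (LieAlgebra.ad ℝ L u) (g (-1)) :=
      (LinearMap.injOn_iff_surjOn_of_finrank_eq (q := g 1) _ (h.dim1'.trans h.dim1.symm)
        fun z hz => h.lie_mem (by norm_num) hu hz).2 fun z hz => h.surj2 1 (.inl rfl) u hu hu0 z hz
    obtain ⟨a, ha, hay⟩ := h.exists_lie_notMem_span_of_mem_neg_one hy (by rintro rfl; simp at hx0)
    obtain ⟨ν, hν⟩ := exists_smul_eq_of_finrank_eq_one h.dim2 hu hu0 (h.lie_mem (by norm_num) ha hu)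
    refine ⟨a, ha, fun hmem => hay ?_⟩
    obtain ⟨μ, hμ⟩ := mem_span_singleton.1 hmem
    have : ⁅a, y⁆ = (μ - ν) • y := hinj (h.lie_mem (by norm_num) ha hy) (smul_mem _ _ hy) (by
      rw [leibniz_lie, ← hν, smul_lie] at hμ
      simp only [LieAlgebra.ad_apply, sub_smul, lie_sub, lie_smul]
      rw [hμ]
      abel)
    rw [this]
    exact smul_mem _ _ (mem_span_singleton_self y)
  · exact h.exists_lie_notMem_span_of_mem_neg_one hx hx0

section Subalgebra

variable (b : LieSubalgebra ℝ L)

theorem two_mul_le_of_le (h : G2GradedData L g) {s : ℤ} (hs : s = 1 ∨ s = -1)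
    (hb : g s ≤ b.toSubmodule) : g (2 * s) ≤ b.toSubmodule :=
  (h.le_bracketSpan_two_mul hs rfl).trans (b.bracketSpan_le hb hb)

theorem three_mul_le_of_le (h : G2GradedData L g) {s : ℤ} (hs : s = 1 ∨ s = -1)
    (hb : g s ≤ b.toSubmodule) : g (3 * s) ≤ b.toSubmodule :=
  (h.le_bracketSpan_three_mul hs rfl rfl).trans (b.bracketSpan_le hb (h.two_mul_le_of_le b hs hb))

theorem le_of_mem_two_mul (h : G2GradedData L g) {s : ℤ} (hs : s = 1 ∨ s = -1)
    (hb : g (-s) ≤ b.toSubmodule) {u : L} (hub : u ∈ b) (hu : u ∈ g (2 * s)) (hu0 : u ≠ 0) :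
    g s ≤ b.toSubmodule := fun z hz => by
  obtain ⟨x, hx, rfl⟩ := h.surj2 s hs u hu hu0 z hz
  exact b.lie_mem hub (hb hx)

theorem le_of_mem_three_mul (h : G2GradedData L g) {s : ℤ} (hs : s = 1 ∨ s = -1)
    (hb : g (-s) ≤ b.toSubmodule) {u : L} (hub : u ∈ b) (hu : u ∈ g (3 * s)) (hu0 : u ≠ 0) :
    g (2 * s) ≤ b.toSubmodule := fun z hz => by
  obtain ⟨x, hx, rfl⟩ := h.surj3 s hs u hu hu0 z hz
  exact b.lie_mem hub (hb hx)

theorem eq_top_of_le (h : G2GradedData L g) {s : ℤ} (hs : s = 1 ∨ s = -1)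
    (h₁ : g s ≤ b.toSubmodule) (h₂ : g (-s) ≤ b.toSubmodule) : b = ⊤ := by
  wlog hs₁ : s = 1 generalizing s
  · exact this (.inl rfl) (by simpa [hs.resolve_left hs₁] using h₂)
      (by simpa [hs.resolve_left hs₁] using h₁) rfl
  subst hs₁
  have hg : ∀ d, g d ≤ b.toSubmodule := by
    intro d
    by_cases hd : 3 < |d|
    · simp [h.supp d hd]
    rw [not_lt, abs_le] at hd
    rcases (by omega : d = -3 ∨ d = -2 ∨ d = -1 ∨ d = 0 ∨ d = 1 ∨ d = 2 ∨ d = 3) with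
      rfl | rfl | rfl | rfl | rfl | rfl | rfl
    · exact h.three_mul_le_of_le b (.inr rfl) h₂
    · exact h.two_mul_le_of_le b (.inr rfl) h₂
    · exact h₂
    · exact h.g_zero_le_bracketSpan.trans (b.bracketSpan_le h₁ h₂)
    · exact h₁
    · exact h.two_mul_le_of_le b (.inl rfl) h₁
    · exact h.three_mul_le_of_le b (.inl rfl) h₁
  rw [← LieSubalgebra.toSubmodule_inj, LieSubalgebra.top_toSubmodule, eq_top_iff,
    ← h.internal.submodule_iSup_eq_top]
  exact iSup_le hg

theorem finrank_inf_le_one (h : G2GradedData L g) (hb : b ≠ ⊤) {s : ℤ} (hs : s = 1 ∨ s = -1)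
    (hneg : finrank ℝ ↥(b.toSubmodule ⊓ g (-s)) = 2) : finrank ℝ ↥(b.toSubmodule ⊓ g s) ≤ 1 := by
  have := h.finiteDimensional
  have hdim : finrank ℝ (g s) = 2 ∧ finrank ℝ (g (-s)) = 2 := by
    rcases hs with rfl | rfl <;> simp [h.dim1, h.dim1']
  by_contra! hgt
  have hfull : finrank ℝ ↥(b.toSubmodule ⊓ g s) = finrank ℝ (g s) :=
    le_antisymm (finrank_mono inf_le_right) (by omega)
  exact hb (h.eq_top_of_le b hs ((le_iff_finrank_inf_eq _ _).2 hfull)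
    ((le_iff_finrank_inf_eq _ _).2 (hneg.trans hdim.2.symm)))

theorem finrank_inf_eq_zero (h : G2GradedData L g) (hb : b ≠ ⊤) {s : ℤ} (hs : s = 1 ∨ s = -1)
    (hneg : finrank ℝ ↥(b.toSubmodule ⊓ g (-s)) = 2) {d : ℤ} (hd : d = 2 * s ∨ d = 3 * s) :
    finrank ℝ ↥(b.toSubmodule ⊓ g d) = 0 := by
  have := h.finiteDimensional
  have hle : g (-s) ≤ b.toSubmodule := (le_iff_finrank_inf_eq _ _).2
    (hneg.trans (by rcases hs with rfl | rfl <;> simp [h.dim1, h.dim1']))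
  by_contra hne
  obtain ⟨u, hu, hu0⟩ := exists_mem_ne_zero_of_finrank_ne_zero hne
  rw [mem_inf] at hu
  have h₂ : g (2 * s) ≤ b.toSubmodule := by
    rcases hd with rfl | rfl
    · exact h.two_mul_le_of_le b hs (h.le_of_mem_two_mul b hs hle hu.1 hu.2 hu0)
    · exact h.le_of_mem_three_mul b hs hle hu.1 hu.2 hu0
  obtain ⟨v, hv, hv0⟩ := exists_mem_ne_zero_of_finrank_ne_zero (p := g (2 * s))
    (by rcases hs with rfl | rfl <;> simp [h.dim2, h.dim2'])
  exact hb (h.eq_top_of_le b hs (h.le_of_mem_two_mul b hs hle (h₂ hv) hv hv0) hle)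

theorem finrank_inf_ne_one (h : G2GradedData L g) {s : ℤ} (hs : s = 1 ∨ s = -1)
    (h₀ : finrank ℝ ↥(b.toSubmodule ⊓ g 0) = 4) : finrank ℝ ↥(b.toSubmodule ⊓ g s) ≠ 1 := by
  have := h.finiteDimensional
  intro h₁
  have hg0 : g 0 ≤ b.toSubmodule := (le_iff_finrank_inf_eq _ _).2 (h₀.trans h.dim0.symm)
  obtain ⟨x, hx, hx0⟩ := exists_mem_ne_zero_of_finrank_ne_zero (h₁ ▸ one_ne_zero)
  rw [mem_inf] at hx
  obtain ⟨a, ha, hax⟩ := h.exists_lie_notMem_span hs hx.2 hx0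
  obtain ⟨c, hc⟩ := exists_smul_eq_of_finrank_eq_one h₁ (mem_inf.2 hx) hx0
    (mem_inf.2 ⟨b.lie_mem (hg0 ha) hx.1, h.lie_mem (zero_add s) ha hx.2⟩)
  exact hax (hc ▸ smul_mem _ _ (mem_span_singleton_self x))

theorem finrank_inf_neg_eq_two (h : G2GradedData L g) {s : ℤ} (hs : s = 1 ∨ s = -1)
    (h₂ : finrank ℝ ↥(b.toSubmodule ⊓ g (2 * s)) = 1)
    (h₃ : finrank ℝ ↥(b.toSubmodule ⊓ g (-3 * s)) = 2) :
    finrank ℝ ↥(b.toSubmodule ⊓ g (-s)) = 2 := by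
  have := h.finiteDimensional
  have hdim : finrank ℝ (g (2 * s)) = 1 ∧ finrank ℝ (g (-3 * s)) = 2 ∧ finrank ℝ (g (-s)) = 2 := by
    rcases hs with rfl | rfl <;> simp [h.dim1, h.dim1', h.dim2, h.dim2', h.dim3, h.dim3']
  have hg2 := (le_iff_finrank_inf_eq _ _).2 (h₂.trans hdim.1.symm)
  have hg3 := (le_iff_finrank_inf_eq _ _).2 (h₃.trans hdim.2.1.symm)
  obtain ⟨u, hu, hu0⟩ := exists_mem_ne_zero_of_finrank_ne_zero (p := g (2 * s)) (by omega)
  have hneg : g (-s) ≤ b.toSubmodule := fun y hy => by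
    obtain ⟨w, hw, rfl⟩ := h.surjOn_ad hs hu hu0 hy
    exact b.lie_mem (hg2 hu) (hg3 hw)
  rw [(le_iff_finrank_inf_eq _ _).1 hneg, hdim.2.2]

end Subalgebra

end G2GradedData

/-- In the `|3|`-graded split real Lie algebra of type `G₂`, any proper graded Lie
subalgebra `b = ⊕_{i=-3}^3 b_i` has dimension at most `9`. -/
theorem stmt8 (L : Type*) [LieRing L] [LieAlgebra ℝ L]
    (g : ℤ → Submodule ℝ L) (hG2 : G2GradedData L g)
    (b : LieSubalgebra ℝ L)
    (hgraded : b.toSubmodule = ⨆ d : ℤ, (b.toSubmodule ⊓ g d))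
    (hproper : b ≠ ⊤) :
    Module.finrank ℝ b.toSubmodule ≤ 9 := by
  have := hG2.finiteDimensional
  obtain ⟨n, hn⟩ : ∃ n : ℤ → ℕ, ∀ d, finrank ℝ ↥(b.toSubmodule ⊓ g d) = n d := ⟨_, fun _ => rfl⟩
  have key : ∀ s : ℤ, s = 1 ∨ s = -1 →
      (n (-s) = 2 → n s ≤ 1 ∧ n (2 * s) = 0 ∧ n (3 * s) = 0) ∧ (n 0 = 4 → n s ≠ 1) ∧
        (n (2 * s) = 1 → n (-3 * s) = 2 → n (-s) = 2) := by
    intro s hs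
    simp only [← hn]
    exact ⟨fun h₂ => ⟨hG2.finrank_inf_le_one b hproper hs h₂,
      hG2.finrank_inf_eq_zero b hproper hs h₂ (.inl rfl),
      hG2.finrank_inf_eq_zero b hproper hs h₂ (.inr rfl)⟩,
      hG2.finrank_inf_ne_one b hs, hG2.finrank_inf_neg_eq_two b hs⟩
  have hcap : ∀ d, n d ≤ finrank ℝ (g d) := fun d => hn d ▸ finrank_mono inf_le_right
  have hsum := hG2.finrank_le_sum_finrank_inf hgraded
  rw [show Finset.Icc (-3 : ℤ) 3 = {-3, -2, -1, 0, 1, 2, 3} from rfl] at hsum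
  have k₁ := key 1 (.inl rfl)
  have k₂ := key (-1) (.inr rfl)
  norm_num [hn] at k₁ k₂ hsum
  have := hcap (-3); have := hcap (-2); have := hcap (-1); have := hcap 0
  have := hcap 1; have := hcap 2; have := hcap 3
  simp only [hG2.dim1, hG2.dim1', hG2.dim2, hG2.dim2', hG2.dim3, hG2.dim3', hG2.dim0] at *
  omega
end

section
/- In M₂(ℝ) with β(A,B) := AB̄ - BĀ (Ā the classical adjoint), β takes values in sl(2,ℝ), and every 3-dimensional subspace V ⊂ M₂(ℝ) on which the quadratic form det restricts with signature (2,1) or (2,0) (up to sign) satisfies β(V,V) spans all of sl(2,ℝ). -/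
open Matrix

/-- The map `β(A,B) = A·B̄ - B·Ā` on `M₂(ℝ)`, `Ā` the classical adjoint. -/
def mbeta (A B : Matrix (Fin 2) (Fin 2) ℝ) : Matrix (Fin 2) (Fin 2) ℝ :=
  A * B.adjugate - B * A.adjugate

private lemma bpol (A B : Matrix (Fin 2) (Fin 2) ℝ) :
    (A + B).det - A.det - B.det = (A * B.adjugate).trace := by
  simp [Matrix.det_fin_two, Matrix.adjugate_fin_two, Matrix.trace_fin_two,
    Matrix.mul_apply, Fin.sum_univ_two, Matrix.add_apply]
  ring

private lemma trace_mul2 (A B : Matrix (Fin 2) (Fin 2) ℝ) :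
    (A * B).trace = A.trace * B.trace - (A * B.adjugate).trace := by
  simp [Matrix.adjugate_fin_two, Matrix.trace_fin_two, Matrix.mul_apply, Fin.sum_univ_two]
  ring

private lemma adj_traceless (A : Matrix (Fin 2) (Fin 2) ℝ) (h : A.trace = 0) :
    A.adjugate = -A := by
  rw [Matrix.trace_fin_two] at h
  rw [Matrix.adjugate_fin_two]
  ext i j
  fin_cases i <;> fin_cases j <;> simp <;> linarith

set_option maxHeartbeats 2000000 in
/-- In `M₂(ℝ)`, `β(A,B) := A·B̄ - B·Ā` takes values in `sl(2,ℝ)`, and every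
3-dimensional subspace `V ⊂ M₂(ℝ)` on which the quadratic form `det` restricts
with signature `(2,1)` or `(2,0)` (up to sign) satisfies: `β(V,V)` spans all of
`sl(2,ℝ)`.  The signature condition is encoded by an orthogonal basis of `V` for
the polarization of `det`, with diagonal values `±(1,1,-1)` or `±(1,1,0)`. -/
theorem stmt17 (V : Submodule ℝ (Matrix (Fin 2) (Fin 2) ℝ))
    (hdim : Module.finrank ℝ V = 3)
    (hsig : ∃ (s : ℝ) (v : Fin 3 → Matrix (Fin 2) (Fin 2) ℝ) (d : Fin 3 → ℝ),
      (s = 1 ∨ s = -1) ∧ Submodule.span ℝ (Set.range v) = V ∧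
      d 0 = 1 ∧ d 1 = 1 ∧ (d 2 = -1 ∨ d 2 = 0) ∧
      ∀ i j, (v i + v j).det - (v i).det - (v j).det =
        s * (if i = j then 2 * d i else 0)) :
    (∀ A B, (mbeta A B).trace = 0) ∧
    (∀ C : Matrix (Fin 2) (Fin 2) ℝ, C.trace = 0 →
      C ∈ Submodule.span ℝ
        {X : Matrix (Fin 2) (Fin 2) ℝ | ∃ A ∈ V, ∃ B ∈ V, X = mbeta A B}) := by
  constructor
  · intro A B
    simp [mbeta, Matrix.trace_fin_two, Matrix.sub_apply, Matrix.mul_apply,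
      Fin.sum_univ_two, Matrix.adjugate_fin_two]
    ring
  · intro C hC
    obtain ⟨s, v, d, hs, hspan, hd0, hd1, hd2, hb⟩ := hsig
    have hss : s * s = 1 := by rcases hs with h | h <;> rw [h] <;> norm_num
    have hsne : s ≠ 0 := by rcases hs with h | h <;> rw [h] <;> norm_num
    have hvV : ∀ i, v i ∈ V := fun i => hspan ▸ Submodule.subset_span ⟨i, rfl⟩
    -- determinants of the basis vectors
    have hdet : ∀ i, (v i).det = s * d i := by
      intro i
      have h := hb i i
      rw [if_pos rfl] at h
      have h2 : v i + v i = (2 : ℝ) • v i := (two_smul ℝ (v i)).symm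
      rw [h2, Matrix.det_smul] at h
      norm_num [Fintype.card_fin] at h
      linarith
    have hdet0 : (v 0).det = s := by rw [hdet 0, hd0, mul_one]
    have hdet1 : (v 1).det = s := by rw [hdet 1, hd1, mul_one]
    have hdet2 : (v 2).det = s * d 2 := hdet 2
    -- the b-values as traces
    have hbt : ∀ i j, (v i * (v j).adjugate).trace = s * (if i = j then 2 * d i else 0) := by
      intro i j
      rw [← bpol]
      exact hb i j
    set M : Matrix (Fin 2) (Fin 2) ℝ := (v 0).adjugate with hM
    have hMdet : M.det = s := by
      rw [hM, Matrix.det_adjugate, hdet0]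
      norm_num [Fintype.card_fin]
    have hMv0 : M * v 0 = s • 1 := by rw [hM, Matrix.adjugate_mul, hdet0]
    have hv0M : v 0 * M = s • 1 := by rw [hM, Matrix.mul_adjugate, hdet0]
    set X : Matrix (Fin 2) (Fin 2) ℝ := M * v 1 with hXdef
    set Y : Matrix (Fin 2) (Fin 2) ℝ := M * v 2 with hYdef
    have htrX : X.trace = 0 := by
      rw [hXdef, hM, Matrix.trace_mul_comm]
      have h := hbt 1 0
      rw [if_neg (by decide)] at h
      rw [h, mul_zero]
    have htrY : Y.trace = 0 := by
      rw [hYdef, hM, Matrix.trace_mul_comm]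
      have h := hbt 2 0
      rw [if_neg (by decide)] at h
      rw [h, mul_zero]
    have hdetX : X.det = 1 := by
      rw [hXdef, Matrix.det_mul, hMdet, hdet1, hss]
    have hdetY : Y.det = d 2 := by
      rw [hYdef, Matrix.det_mul, hMdet, hdet2]
      linear_combination (d 2) * hss
    have htrXadjY : (X * Y.adjugate).trace = 0 := by
      have h1 : X * Y.adjugate = M * (v 1 * (v 2).adjugate) * M.adjugate := by
        rw [hXdef, hYdef, Matrix.adjugate_mul_distrib]
        noncomm_ring
      have h := hbt 1 2
      rw [if_neg (by decide)] at h
      rw [h1, Matrix.trace_mul_cycle, Matrix.adjugate_mul, hMdet, smul_mul_assoc, one_mul,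
        Matrix.trace_smul, h]
      simp
    have htrXY : (X * Y).trace = 0 := by
      rw [trace_mul2, htrX, htrXadjY, zero_mul, sub_zero]
    -- entry-level facts
    have hX11 : X 1 1 = -(X 0 0) := by
      rw [Matrix.trace_fin_two] at htrX; linarith
    have hY11 : Y 1 1 = -(Y 0 0) := by
      rw [Matrix.trace_fin_two] at htrY; linarith
    have Ex : (X 0 0) ^ 2 + X 0 1 * X 1 0 = -1 := by
      rw [Matrix.det_fin_two, hX11] at hdetX
      linear_combination -hdetX
    have Ey : (Y 0 0) ^ 2 + Y 0 1 * Y 1 0 = -(d 2) := by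
      rw [Matrix.det_fin_two, hY11] at hdetY
      linear_combination -hdetY
    have Et : 2 * (X 0 0 * Y 0 0) + X 0 1 * Y 1 0 + X 1 0 * Y 0 1 = 0 := by
      rw [Matrix.trace_fin_two, Matrix.mul_apply, Matrix.mul_apply,
        Fin.sum_univ_two, Fin.sum_univ_two, hX11, hY11] at htrXY
      linear_combination htrXY
    rcases hd2 with hd2 | hd2
    · -- main case : d 2 = -1
      rw [hd2] at Ey
      norm_num at Ey
      set Z : Matrix (Fin 2) (Fin 2) ℝ := X * Y - Y * X with hZdef
      have hZ00 : Z 0 0 = X 0 1 * Y 1 0 - X 1 0 * Y 0 1 := by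
        simp [hZdef, Matrix.sub_apply, Matrix.mul_apply, Fin.sum_univ_two]
        ring
      have hZ01 : Z 0 1 = 2 * (X 0 0 * Y 0 1 - X 0 1 * Y 0 0) := by
        simp [hZdef, Matrix.sub_apply, Matrix.mul_apply, Fin.sum_univ_two, hX11, hY11]
        ring
      have hZ10 : Z 1 0 = 2 * (X 1 0 * Y 0 0 - X 0 0 * Y 1 0) := by
        simp [hZdef, Matrix.sub_apply, Matrix.mul_apply, Fin.sum_univ_two, hX11, hY11]
        ring
      have hZ11 : Z 1 1 = -(Z 0 0) := by
        simp [hZdef, Matrix.sub_apply, Matrix.mul_apply, Fin.sum_univ_two]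
        ring
      set PC : Matrix (Fin 2) (Fin 2) ℝ := M * C * M.adjugate with hPCdef
      have htrPC : PC.trace = 0 := by
        rw [hPCdef, Matrix.trace_mul_cycle, Matrix.adjugate_mul, hMdet, smul_mul_assoc, one_mul,
          Matrix.trace_smul, hC]
        simp
      have hPC11 : PC 1 1 = -(PC 0 0) := by
        rw [Matrix.trace_fin_two] at htrPC; linarith
      set D : ℝ := X 0 0 * (Y 0 1 * Z 1 0 - Y 1 0 * Z 0 1)
        - X 0 1 * (Y 0 0 * Z 1 0 - Y 1 0 * Z 0 0)
        + X 1 0 * (Y 0 0 * Z 0 1 - Y 0 1 * Z 0 0) with hDdef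
      have hD4 : D = 4 := by
        rw [hDdef, hZ00, hZ01, hZ10]
        linear_combination (2 * (X 0 0 * Y 0 0) + X 0 1 * Y 1 0 + X 1 0 * Y 0 1) * Et
          + (-4 * ((Y 0 0) ^ 2 + Y 0 1 * Y 1 0)) * Ex + 4 * Ey
      have hDne : D ≠ 0 := by rw [hD4]; norm_num
      set Na : ℝ := PC 0 0 * (Y 0 1 * Z 1 0 - Y 1 0 * Z 0 1)
        - PC 0 1 * (Y 0 0 * Z 1 0 - Y 1 0 * Z 0 0)
        + PC 1 0 * (Y 0 0 * Z 0 1 - Y 0 1 * Z 0 0) with hNa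
      set Nb : ℝ := X 0 0 * (PC 0 1 * Z 1 0 - PC 1 0 * Z 0 1)
        - X 0 1 * (PC 0 0 * Z 1 0 - PC 1 0 * Z 0 0)
        + X 1 0 * (PC 0 0 * Z 0 1 - PC 0 1 * Z 0 0) with hNb
      set Nc : ℝ := X 0 0 * (Y 0 1 * PC 1 0 - Y 1 0 * PC 0 1)
        - X 0 1 * (Y 0 0 * PC 1 0 - Y 1 0 * PC 0 0)
        + X 1 0 * (Y 0 0 * PC 0 1 - Y 0 1 * PC 0 0) with hNc
      have hPCeq : PC = (Na / D) • X + (Nb / D) • Y + (Nc / D) • Z := by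
        ext i j
        fin_cases i <;> fin_cases j <;>
          simp only [Fin.mk_zero, Fin.mk_one, Matrix.add_apply, Matrix.smul_apply, smul_eq_mul]
        · rw [hNa, hNb, hNc]; field_simp; ring
        · rw [hNa, hNb, hNc]; field_simp; ring
        · rw [hNa, hNb, hNc]; field_simp; ring
        · rw [hNa, hNb, hNc, hPC11, hX11, hY11, hZ11]; field_simp; ring
      have hconj : ∀ A B : Matrix (Fin 2) (Fin 2) ℝ,
          M * mbeta A B * M.adjugate = mbeta (M * A) (M * B) := by
        intro A B
        simp only [mbeta, Matrix.adjugate_mul_distrib]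
        noncomm_ring
      have hadjX : X.adjugate = -X := adj_traceless X htrX
      have hadjY : Y.adjugate = -Y := adj_traceless Y htrY
      have hadjs : ((s • 1 : Matrix (Fin 2) (Fin 2) ℝ)).adjugate = s • 1 := by
        simp [Matrix.adjugate_smul, Matrix.adjugate_one]
      have hb01 : M * mbeta (v 0) (v 1) * M.adjugate = (-(2 * s)) • X := by
        rw [hconj, hMv0, ← hXdef, mbeta, hadjX, hadjs, smul_mul_assoc, one_mul,
          mul_smul_comm, mul_one]
        module
      have hb02 : M * mbeta (v 0) (v 2) * M.adjugate = (-(2 * s)) • Y := by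
        rw [hconj, hMv0, ← hYdef, mbeta, hadjY, hadjs, smul_mul_assoc, one_mul,
          mul_smul_comm, mul_one]
        module
      have hb12 : M * mbeta (v 1) (v 2) * M.adjugate = -Z := by
        rw [hconj, ← hXdef, ← hYdef, mbeta, hadjX, hadjY, hZdef]
        noncomm_ring
      have hcoef : ∀ q : ℝ, -(s / 2) * q * -(2 * s) = q := by
        intro q; linear_combination q * hss
      set W : Matrix (Fin 2) (Fin 2) ℝ :=
        (-(s / 2) * (Na / D)) • mbeta (v 0) (v 1) + (-(s / 2) * (Nb / D)) • mbeta (v 0) (v 2)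
          + (-(Nc / D)) • mbeta (v 1) (v 2) with hW
      have hMW : M * W * M.adjugate = (Na / D) • X + (Nb / D) • Y + (Nc / D) • Z := by
        have e1 : M * W * M.adjugate =
            (-(s / 2) * (Na / D)) • (M * mbeta (v 0) (v 1) * M.adjugate)
            + (-(s / 2) * (Nb / D)) • (M * mbeta (v 0) (v 2) * M.adjugate)
            + (-(Nc / D)) • (M * mbeta (v 1) (v 2) * M.adjugate) := by
          rw [hW]
          simp only [Matrix.add_mul, Matrix.mul_add, smul_mul_assoc, mul_smul_comm]
        rw [e1, hb01, hb02, hb12, smul_smul, smul_smul, hcoef, hcoef]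
        simp [smul_neg, neg_smul]
      have hCW : M * C * M.adjugate = M * W * M.adjugate := by
        rw [← hPCdef, hPCeq, hMW]
      have h1 : ∀ P : Matrix (Fin 2) (Fin 2) ℝ,
          M.adjugate * (M * P * M.adjugate) * M = (s * s) • P := by
        intro P
        have e : M.adjugate * (M * P * M.adjugate) * M
            = M.adjugate * M * P * (M.adjugate * M) := by noncomm_ring
        rw [e, Matrix.adjugate_mul, hMdet, smul_mul_assoc, one_mul, mul_smul_comm, mul_one,
          smul_smul]
      have hC_eq : C = W := by
        calc C = (s * s) • C := by rw [hss, one_smul]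
        _ = M.adjugate * (M * C * M.adjugate) * M := (h1 C).symm
        _ = M.adjugate * (M * W * M.adjugate) * M := by rw [hCW]
        _ = (s * s) • W := h1 W
        _ = W := by rw [hss, one_smul]
      have hwmem : ∀ i j : Fin 3, mbeta (v i) (v j) ∈ Submodule.span ℝ
          {X : Matrix (Fin 2) (Fin 2) ℝ | ∃ A ∈ V, ∃ B ∈ V, X = mbeta A B} :=
        fun i j => Submodule.subset_span ⟨v i, hvV i, v j, hvV j, rfl⟩
      rw [hC_eq, hW]
      exact Submodule.add_mem _ (Submodule.add_mem _
        (Submodule.smul_mem _ _ (hwmem 0 1)) (Submodule.smul_mem _ _ (hwmem 0 2)))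
        (Submodule.smul_mem _ _ (hwmem 1 2))
    · -- degenerate case : d 2 = 0 is impossible
      rw [hd2, neg_zero] at Ey
      clear_value M X Y
      have hx2 : X 0 1 ≠ 0 := by
        intro h
        rw [h] at Ex
        nlinarith [sq_nonneg (X 0 0)]
      have key : (X 0 1 * Y 0 0 - X 0 0 * Y 0 1) ^ 2 + (Y 0 1) ^ 2 = 0 := by
        linear_combination (X 0 1 ^ 2) * Ey - (X 0 1 * Y 0 1) * Et + (Y 0 1 ^ 2) * Ex
      have hy2 : Y 0 1 = 0 := by
        have hsq : (Y 0 1) ^ 2 = 0 := by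
          linarith [sq_nonneg (X 0 1 * Y 0 0 - X 0 0 * Y 0 1), sq_nonneg (Y 0 1)]
        exact pow_eq_zero_iff (by norm_num) |>.mp hsq
      have hy1 : Y 0 0 = 0 := by
        have h1 : (X 0 1 * Y 0 0) ^ 2 = 0 := by
          rw [hy2] at key
          linear_combination key
        have h2 : X 0 1 * Y 0 0 = 0 := by
          exact pow_eq_zero_iff (by norm_num) |>.mp h1
        rcases mul_eq_zero.mp h2 with h | h
        · exact absurd h hx2
        · exact h
      have hy3 : Y 1 0 = 0 := by
        rw [hy1, hy2] at Et
        have h2 : X 0 1 * Y 1 0 = 0 := by linarith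
        rcases mul_eq_zero.mp h2 with h | h
        · exact absurd h hx2
        · exact h
      have hY0 : Y = 0 := by
        ext i j
        fin_cases i <;> fin_cases j <;>
          simp [hy1, hy2, hy3, hY11]
      have hv2 : v 2 = 0 := by
        have h := congrArg (fun P => v 0 * P) hY0
        simp only [hYdef, mul_zero] at h
        rw [← mul_assoc, hv0M, Matrix.smul_mul, one_mul] at h
        rcases smul_eq_zero.mp h with h' | h'
        · exact absurd h' hsne
        · exact h'
      exfalso
      have hle : V ≤ Submodule.span ℝ (Set.range ![v 0, v 1]) := by
        rw [← hspan]
        apply Submodule.span_le.2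
        rintro _ ⟨i, rfl⟩
        have hi : i = 0 ∨ i = 1 ∨ i = 2 := by omega
        rcases hi with rfl | rfl | rfl
        · exact Submodule.subset_span ⟨0, rfl⟩
        · exact Submodule.subset_span ⟨1, rfl⟩
        · rw [hv2]
          exact Submodule.zero_mem _
      have h2 : Module.finrank ℝ V ≤ 2 := by
        refine (Submodule.finrank_mono hle).trans ?_
        simpa [Set.finrank] using finrank_range_le_card (R := ℝ) ![v 0, v 1]
      omega
end
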